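/- arXiv:1311.2835 — 9 statements merged into one kernel-verified Lean document; each statement's English description precedes it below -/
import Mathlib

section
/- Let H be a virtually polycyclic group and A ⊆ H a subgroup. Then there exists a natural number N such that for every subgroup B ⊆ H containing A with finite index, the index [B : A] is at most N. -/
/-- A group is polycyclic if it admits a subnormal series with cyclic factors. -/
def IsPolycyclic (G : Type*) [Group G] : Prop :=
  ∃ (n : ℕ) (s : Fin (n + 1) → Subgroup G),
    s 0 = ⊥ ∧ s (Fin.last n) = ⊤ ∧
    ∀ i : Fin n, s i.castSucc ≤ s i.succ ∧
      ∃ _ : ((s i.castSucc).subgroupOf (s i.succ)).Normal,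
        IsCyclic (↥(s i.succ) ⧸ (s i.castSucc).subgroupOf (s i.succ))

/-- A group is virtually polycyclic if it has a polycyclic subgroup of finite index. -/
def IsVirtuallyPolycyclic (G : Type*) [Group G] : Prop :=
  ∃ H : Subgroup G, IsPolycyclic H ∧ H.FiniteIndex

/-!
`HasBoundedOvergroupIndex G` (for each subgroup `A`, the indices `[B : A]` over the overgroups
`B ≥ A` in which `A` has finite index are bounded) holds for `ℤ`: a nontrivial subgroup has
finite index, and the only finite subgroup is trivial. It passes to quotients, hence to all cyclic
groups, and to extensions: for `K` normal and `A ≤ B`, Dedekind's law `KA ∩ B = (B ∩ K)A` gives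
`[B : A] = [B ∩ K : A ∩ K] · [BK/K : AK/K]`. A polycyclic group is an iterated extension of cyclic
groups starting from the trivial group. Finally the property passes from a finite-index subgroup
`K` to `G`, since `[B : A] ≤ [B : A ∩ K] = [B ∩ K : A ∩ K] · [B : B ∩ K]` and
`[B : B ∩ K] ≤ [G : K]`.
-/

open Subgroup
open scoped Pointwise

namespace Subgroup

variable {G : Type*} [Group G]

theorem relIndex_le_index {A : Subgroup G} (hA : A.index ≠ 0) (B : Subgroup G) :
    A.relIndex B ≤ A.index :=
  relIndex_top_right A ▸ relIndex_le_of_le_right le_top (by rwa [relIndex_top_right])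

theorem relIndex_subgroupOf_subgroupOf (A B K : Subgroup G) :
    (A.subgroupOf K).relIndex (B.subgroupOf K) = A.relIndex (B ⊓ K) := by
  rw [← inf_subgroupOf_right B K, relIndex_subgroupOf inf_le_right]

theorem eq_bot_of_finite [IsMulTorsionFree G] (B : Subgroup G) [Finite B] : B = ⊥ :=
  (eq_bot_iff_forall B).mpr fun x hx =>
    congrArg Subtype.val (isOfFinOrder_of_finite (⟨x, hx⟩ : B)).eq_one'

/-- Second isomorphism theorem for indices: `N ⊔ A = N * A`, so every coset of `A` in `N ⊔ A`
meets `N`. -/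
theorem relIndex_sup_of_le_normalizer {A N : Subgroup G} (hA : A ≤ normalizer (N : Set G)) :
    A.relIndex (N ⊔ A) = A.relIndex N := by
  let ι := quotientSubgroupOfEmbeddingOfLE A (le_sup_left : N ≤ N ⊔ A)
  have hsurj : Function.Surjective ι := by
    refine fun y => QuotientGroup.induction_on y fun x => ?_
    obtain ⟨n, hn, a, ha, hna⟩ : (x : G) ∈ (N : Set G) * A := by
      rw [← coe_mul_of_right_le_normalizer_left N A hA]; exact x.2
    refine ⟨QuotientGroup.mk ⟨n, hn⟩, (QuotientGroup.eq (s := A.subgroupOf (N ⊔ A))).mpr ?_⟩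
    simpa [mem_subgroupOf, ← hna] using ha
  exact (Nat.card_congr (Equiv.ofBijective ι ⟨ι.injective, hsurj⟩)).symm

theorem le_normalizer_inf_of_le {A B K : Subgroup G} [K.Normal] (hAB : A ≤ B) :
    A ≤ normalizer ((B ⊓ K : Subgroup G) : Set G) :=
  hAB.trans <| (le_inf le_normalizer le_normalizer_of_normal).trans
    inf_normalizer_le_normalizer_inf

theorem sup_inf_eq_inf_sup_of_le {A B K : Subgroup G} [K.Normal] (hAB : A ≤ B) :
    (K ⊔ A) ⊓ B = (B ⊓ K) ⊔ A := by
  have hA := le_normalizer_inf_of_le (K := K) hAB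
  apply SetLike.coe_injective
  rw [coe_inf, normal_mul, Set.inter_comm, ← inf_mul_assoc B K A hAB,
    coe_mul_of_right_le_normalizer_left _ _ hA]

theorem relIndex_eq_relIndex_inf_mul_relIndex_map {A B : Subgroup G} (K : Subgroup G) [K.Normal]
    (hAB : A ≤ B) :
    A.relIndex B = A.relIndex (B ⊓ K) *
      (A.map (QuotientGroup.mk' K)).relIndex (B.map (QuotientGroup.mk' K)) := by
  have hquot : (A.map (QuotientGroup.mk' K)).relIndex (B.map (QuotientGroup.mk' K)) =
      ((K ⊔ A) ⊓ B).relIndex B := by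
    rw [inf_relIndex_right, ← relIndex_comap, comap_map_eq, QuotientGroup.ker_mk', sup_comm]
  rw [hquot, sup_inf_eq_inf_sup_of_le hAB,
    ← relIndex_sup_of_le_normalizer (le_normalizer_inf_of_le hAB)]
  exact (relIndex_mul_relIndex A _ B le_sup_right (sup_le inf_le_left hAB)).symm

end Subgroup

theorem Int.index_ne_zero_of_ne_bot {A : Subgroup (Multiplicative ℤ)} (hA : A ≠ ⊥) :
    A.index ≠ 0 := by
  obtain ⟨a, haA, ha⟩ := (bot_or_exists_ne_one A).resolve_left hA
  -- `zpowers a` in `Multiplicative ℤ` unfolds to `zmultiples a.toAdd` in `ℤ`.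
  have hindex : (zpowers a).index = a.toAdd.natAbs := Int.index_zmultiples a.toAdd
  refine ne_zero_of_dvd_ne_zero ?_ (index_dvd_of_le (zpowers_le.mpr haA))
  rwa [hindex, Int.natAbs_ne_zero]

/-- `A.relIndex B ≠ 0` says that `A` has finite index in `B` (`relIndex` is `0` otherwise). -/
def HasBoundedOvergroupIndex (G : Type*) [Group G] : Prop :=
  ∀ A : Subgroup G, ∃ N : ℕ, ∀ B : Subgroup G, A ≤ B → A.relIndex B ≠ 0 → A.relIndex B ≤ N

namespace HasBoundedOvergroupIndex

variable {G : Type*} [Group G]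

theorem of_finite [Finite G] : HasBoundedOvergroupIndex G :=
  fun A => ⟨A.index, fun B _ _ => relIndex_le_index index_ne_zero_of_finite B⟩

theorem of_surjective {G' : Type*} [Group G'] (f : G →* G') (hf : Function.Surjective f)
    (h : HasBoundedOvergroupIndex G) : HasBoundedOvergroupIndex G' := by
  intro A
  obtain ⟨N, hN⟩ := h (A.comap f)
  refine ⟨N, fun B hAB hne => ?_⟩
  have hcomap : (A.comap f).relIndex (B.comap f) = A.relIndex B := by
    rw [relIndex_comap, map_comap_eq_self_of_surjective hf]
  rw [← hcomap] at hne ⊢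
  exact hN _ (comap_mono hAB) hne

theorem of_mulEquiv {G' : Type*} [Group G'] (e : G ≃* G') (h : HasBoundedOvergroupIndex G) :
    HasBoundedOvergroupIndex G' :=
  h.of_surjective e.toMonoidHom e.surjective

theorem int : HasBoundedOvergroupIndex (Multiplicative ℤ) := by
  intro A
  rcases eq_or_ne A ⊥ with rfl | hA
  · refine ⟨1, fun B _ hne => ?_⟩
    rw [relIndex_bot_left] at hne
    have : Finite B := Nat.finite_of_card_ne_zero hne
    rw [B.eq_bot_of_finite, relIndex_self]
  · exact ⟨A.index, fun B _ _ => relIndex_le_index (Int.index_ne_zero_of_ne_bot hA) B⟩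

theorem of_isCyclic [IsCyclic G] : HasBoundedOvergroupIndex G := by
  obtain ⟨g, hg⟩ := IsCyclic.exists_generator (α := G)
  refine int.of_surjective (zpowersHom G g) fun x => ?_
  obtain ⟨k, hk⟩ := mem_zpowers_iff.mp (hg x)
  exact ⟨Multiplicative.ofAdd k, hk⟩

theorem exists_bound_relIndex_inf {K : Subgroup G} (hK : HasBoundedOvergroupIndex K)
    (A : Subgroup G) :
    ∃ N : ℕ, ∀ B : Subgroup G, A ≤ B → A.relIndex (B ⊓ K) ≠ 0 → A.relIndex (B ⊓ K) ≤ N := by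
  obtain ⟨N, hN⟩ := hK (A.subgroupOf K)
  refine ⟨N, fun B hAB hne => ?_⟩
  rw [← relIndex_subgroupOf_subgroupOf] at hne ⊢
  exact hN _ (subgroupOf_mono _ hAB) hne

theorem of_normal (K : Subgroup G) [K.Normal] (hK : HasBoundedOvergroupIndex K)
    (hQ : HasBoundedOvergroupIndex (G ⧸ K)) : HasBoundedOvergroupIndex G := by
  intro A
  obtain ⟨NK, hNK⟩ := hK.exists_bound_relIndex_inf A
  obtain ⟨NQ, hNQ⟩ := hQ (A.map (QuotientGroup.mk' K))
  refine ⟨NK * NQ, fun B hAB hne => ?_⟩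
  rw [relIndex_eq_relIndex_inf_mul_relIndex_map K hAB] at hne ⊢
  exact Nat.mul_le_mul (hNK B hAB (left_ne_zero_of_mul hne))
    (hNQ _ (map_mono hAB) (right_ne_zero_of_mul hne))

theorem of_finiteIndex (K : Subgroup G) [K.FiniteIndex] (hK : HasBoundedOvergroupIndex K) :
    HasBoundedOvergroupIndex G := by
  intro A
  obtain ⟨N, hN⟩ := hK.exists_bound_relIndex_inf A
  refine ⟨N * K.index, fun B hAB hne => ?_⟩
  have hsplit : (A ⊓ K).relIndex B = A.relIndex (B ⊓ K) * K.relIndex B := by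
    rw [inf_comm B, relIndex_inf_mul_relIndex]
  have hne' : (A ⊓ K).relIndex B ≠ 0 :=
    relIndex_inf_ne_zero hne (mt index_eq_zero_of_relIndex_eq_zero FiniteIndex.index_ne_zero)
  calc A.relIndex B ≤ (A ⊓ K).relIndex B := relIndex_le_of_le_left inf_le_left hne'
    _ = A.relIndex (B ⊓ K) * K.relIndex B := hsplit
    _ ≤ N * K.index := Nat.mul_le_mul (hN B hAB (left_ne_zero_of_mul (hsplit ▸ hne')))
        (relIndex_le_index FiniteIndex.index_ne_zero B)

theorem of_isPolycyclic (h : IsPolycyclic G) : HasBoundedOvergroupIndex G := by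
  obtain ⟨n, s, h_bot, h_top, h_step⟩ := h
  have h_terms : ∀ i, HasBoundedOvergroupIndex (s i) := by
    intro i
    induction i using Fin.induction with
    | zero => rw [h_bot]; exact of_finite
    | succ i ih =>
      obtain ⟨hle, hnormal, hcyclic⟩ := h_step i
      exact of_normal _ (ih.of_mulEquiv (subgroupOfEquivOfLe hle).symm) of_isCyclic
  exact (h_top ▸ h_terms (Fin.last n)).of_mulEquiv topEquiv

end HasBoundedOvergroupIndex

/-- In a virtually polycyclic group, the index of a subgroup `A` in finite-index
overgroups `B` is uniformly bounded. -/
theorem bounded_index_of_overgroups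
    (H : Type*) [Group H] (hH : IsVirtuallyPolycyclic H) (A : Subgroup H) :
    ∃ N : ℕ, ∀ B : Subgroup H, A ≤ B → (A.subgroupOf B).FiniteIndex →
      (A.subgroupOf B).index ≤ N := by
  obtain ⟨K, hK, hK_fin⟩ := hH
  obtain ⟨N, hN⟩ := (HasBoundedOvergroupIndex.of_isPolycyclic hK).of_finiteIndex K A
  exact ⟨N, fun B hAB hB => hN B hAB hB.index_ne_zero⟩
end

section
/- For every natural number n, there are, up to isomorphism, only finitely many virtually cyclic groups A all of whose finite subgroups have order at most n. -/
/-- A group is virtually cyclic if it has a cyclic subgroup of finite index. -/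
def IsVirtuallyCyclic (G : Type*) [Group G] : Prop :=
  ∃ H : Subgroup G, IsCyclic H ∧ H.FiniteIndex

/-!
An infinite virtually cyclic group `A` has a normal infinite cyclic subgroup `⟨t⟩` of finite
index, and conjugation acts on it through a sign `ε : A → {±1}`. On the centralizer `C = ker ε`
(of index at most `2`) the element `t` is central, so the transfer `C → ⟨t⟩`, `g ↦ g ^ [C : ⟨t⟩]`,
is a homomorphism; its kernel is a finite subgroup `F` and its image is infinite cyclic, so a
lift `s` of a generator has `[C : ⟨s⟩] ≤ |F| ≤ n`. The normal core of `⟨s⟩` is then a normal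
infinite cyclic subgroup of index at most `(2n)!`.

Given such a `⟨t⟩` with quotient `Q` of order `m`, the group is `ℤ × Q` with the product
`(a, x) (b, y) = (a + ε x b + c x y, x y)` for a 2-cocycle `c`. Averaging `c` over `Q` shows
`m • c` is a coboundary, and subtracting the rounded-down average leaves a cohomologous cocycle
with values in `{-1, 0, 1}`. Finite groups are determined by their multiplication tables, so
in either case the group is described by one of finitely many pieces of finite data.
-/

universe u

open Subgroup Function

section ConjugationSign

variable {G : Type*} [Group G] {t : G}

theorem exists_units_conj_zpow (ht : ¬IsOfFinOrder t) [(zpowers t).Normal] :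
    ∃ ε : G →* ℤˣ, ∀ g : G, g * t * g⁻¹ = t ^ (ε g : ℤ) := by
  have tinj := injective_zpow_iff_not_isOfFinOrder.mpr ht
  choose E hE using fun g : G =>
    mem_zpowers_iff.mp (Normal.conj_mem inferInstance t (mem_zpowers t) g)
  have hE_mul (x y : G) : E (x * y) = E x * E y := tinj <| by
    simp only
    rw [hE, zpow_mul, hE, conj_zpow, hE]
    group
  have hE_one : E 1 = 1 := tinj <| by simp only; rw [hE]; group
  let χ : G →* ℤ := { toFun := E, map_one' := hE_one, map_mul' := hE_mul }
  exact ⟨χ.toHomUnits, fun g => (hE g).symm⟩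

variable {ε : G →* ℤˣ} (hε : ∀ g : G, g * t * g⁻¹ = t ^ (ε g : ℤ))
include hε

theorem mul_zpow_eq_zpow_units_mul (g : G) (k : ℤ) : g * t ^ k = t ^ (ε g * k) * g := by
  rw [zpow_mul, ← hε, conj_zpow, inv_mul_cancel_right]

theorem zpowers_le_ker_of_conj (ht : ¬IsOfFinOrder t) : zpowers t ≤ ε.ker := by
  refine zpowers_le.mpr (Units.ext (injective_zpow_iff_not_isOfFinOrder.mpr ht ?_))
  simp only [← hε t, mul_inv_cancel_right, Units.val_one, zpow_one]

theorem mem_center_ker_of_conj (ht : t ∈ ε.ker) : (⟨t, ht⟩ : ε.ker) ∈ center ε.ker := by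
  refine mem_center_iff.mpr fun g => Subtype.ext ?_
  have hg := hε g
  rw [g.2, Units.val_one, zpow_one] at hg
  exact mul_inv_eq_iff_eq_mul.mp hg

end ConjugationSign

section CentralTransfer

variable {G : Type*} [Group G]

theorem finiteIndex_zpowers_and_index_le_card_ker {G' : Type*} [Group G'] (φ : G →* G')
    [Finite φ.ker] {s : G} (hs : φ.range ≤ zpowers (φ s)) :
    (zpowers s).FiniteIndex ∧ (zpowers s).index ≤ Nat.card φ.ker := by
  have hsurj : Surjective fun k : φ.ker => ((k : G) : G ⧸ zpowers s) := by
    intro q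
    obtain ⟨g, rfl⟩ := QuotientGroup.mk_surjective q
    obtain ⟨k, hk⟩ := mem_zpowers_iff.mp (hs ⟨g, rfl⟩)
    refine ⟨⟨g * s ^ (-k), by simp [← hk]⟩, QuotientGroup.eq.mpr ?_⟩
    simp
  have := Finite.of_surjective _ hsurj
  exact ⟨finiteIndex_of_finite_quotient,
    (index_eq_card _).trans_le (Nat.card_le_card_of_surjective _ hsurj)⟩

open scoped IsMulCommutative in
theorem exists_zpowers_index_le_of_mem_center {τ : G} (hτ : τ ∈ center G)
    (hτ' : ¬IsOfFinOrder τ) [(zpowers τ).FiniteIndex] {n : ℕ}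
    (hn : ∀ K : Subgroup G, (K : Set G).Finite → Nat.card K ≤ n) :
    ∃ s : G, (zpowers s).FiniteIndex ∧ (zpowers s).index ≤ n := by
  set φ : G →* zpowers τ := (MonoidHom.id (zpowers τ)).transfer
  have hφ (g : G) : (φ g : G) = g ^ (zpowers τ).index := by
    refine congrArg Subtype.val (MonoidHom.transfer_eq_pow _ g fun k g₀ hk => ?_)
    have hc := mem_center_iff.mp (zpowers_le.mpr hτ hk) g₀
    refine mul_right_cancel (b := g₀) ?_
    rw [← hc]
    group
  have hdisj : zpowers τ ⊓ φ.ker = ⊥ := by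
    refine eq_bot_iff.mpr fun x ⟨hx, hxφ⟩ => ?_
    obtain ⟨a, rfl⟩ := mem_zpowers_iff.mp hx
    have h0 : τ ^ (a * (zpowers τ).index) = τ ^ (0 : ℤ) := by
      rw [zpow_mul, zpow_natCast, ← hφ, hxφ, OneMemClass.coe_one, zpow_zero]
    obtain rfl : a = 0 := by
      simpa [FiniteIndex.index_ne_zero] using injective_zpow_iff_not_isOfFinOrder.mpr hτ' h0
    simp
  -- `φ.ker` meets `zpowers τ` trivially, so it embeds in the finite quotient by `zpowers τ`
  have : Finite φ.ker := by
    refine Nat.finite_of_card_ne_zero ?_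
    rw [← relIndex_bot_left, ← hdisj, inf_relIndex_right]
    exact (isFiniteRelIndex_of_finiteIndex (K := φ.ker)).relIndex_ne_zero
  obtain ⟨_, ⟨s, rfl⟩, hs⟩ : ∃ g ∈ φ.range, zpowers g = φ.range := by
    obtain ⟨g, hg⟩ := φ.range.isCyclic_iff_exists_zpowers_eq_top.mp inferInstance
    exact ⟨g, hg ▸ mem_zpowers g, hg⟩
  obtain ⟨hfin, hle⟩ := finiteIndex_zpowers_and_index_le_card_ker φ hs.ge
  exact ⟨s, hfin, hle.trans (hn _ (Set.toFinite _))⟩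

end CentralTransfer

section IndexBound

variable {G : Type*} [Group G]

theorem index_ker_le_two (f : G →* ℤˣ) : f.ker.index ≤ 2 := by
  rw [index_ker, ← Fintype.card_units_int, ← Nat.card_eq_fintype_card]
  exact Nat.card_le_card_of_injective _ Subtype.val_injective

theorem index_zpowers_coe {H : Subgroup G} (h : H) :
    (zpowers (h : G)).index = (zpowers h).index * H.index := by
  rw [← index_map_subtype, MonoidHom.map_zpowers, coe_subtype]

theorem index_normalCore_le_factorial (H : Subgroup G) [H.FiniteIndex] :
    H.normalCore.index ≤ H.index.factorial := by
  refine Nat.le_of_dvd (Nat.factorial_pos _) ?_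
  rw [normalCore_eq_ker, index_ker, index_eq_card, ← Nat.card_perm]
  exact card_subgroup_dvd_card _

theorem exists_zpowers_eq_normalCore (g : G) : ∃ u : G, zpowers u = (zpowers g).normalCore :=
  (normalCore _).isCyclic_iff_exists_zpowers_eq_top.mp (isCyclic_of_le (normalCore_le _))

theorem not_isOfFinOrder_of_finiteIndex [Infinite G] {g : G} [(zpowers g).FiniteIndex] :
    ¬IsOfFinOrder g := fun hg =>
  have := (finite_iff_finite_and_finiteIndex (zpowers g)).mpr
    ⟨(finite_zpowers.mpr hg).to_subtype, ‹_›⟩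
  not_finite G

theorem IsVirtuallyCyclic.exists_zpowers_normal (hG : IsVirtuallyCyclic G) :
    ∃ t : G, (zpowers t).Normal ∧ (zpowers t).FiniteIndex := by
  obtain ⟨H, hcyc, hH⟩ := hG
  obtain ⟨g, rfl⟩ := H.isCyclic_iff_exists_zpowers_eq_top.mp hcyc
  obtain ⟨u, hu⟩ := exists_zpowers_eq_normalCore g
  exact ⟨u, hu ▸ normalCore_normal _, hu ▸ finiteIndex_normalCore _⟩

theorem IsVirtuallyCyclic.exists_zpowers_normal_index_le [Infinite G] (hG : IsVirtuallyCyclic G)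
    {n : ℕ} (hn : ∀ K : Subgroup G, (K : Set G).Finite → Nat.card K ≤ n) :
    ∃ t : G, (zpowers t).Normal ∧ (zpowers t).FiniteIndex ∧
      (zpowers t).index ≤ (2 * n).factorial := by
  obtain ⟨t, _, ht⟩ := hG.exists_zpowers_normal
  have ht' : ¬IsOfFinOrder t := not_isOfFinOrder_of_finiteIndex
  obtain ⟨ε, hε⟩ := exists_units_conj_zpow ht'
  set C := ε.ker
  have htC : t ∈ C := zpowers_le_ker_of_conj hε ht' (mem_zpowers t)
  have : (zpowers (⟨t, htC⟩ : C)).FiniteIndex :=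
    ⟨left_ne_zero_of_mul (index_zpowers_coe (⟨t, htC⟩ : C) ▸ ht.index_ne_zero)⟩
  have hnC (K : Subgroup C) (hK : (K : Set C).Finite) : Nat.card K ≤ n := by
    rw [← card_map_of_injective C.subtype_injective]
    exact hn _ (by rw [Subgroup.coe_map]; exact hK.image _)
  obtain ⟨s, hs, hsn⟩ := exists_zpowers_index_le_of_mem_center (mem_center_ker_of_conj hε htC)
    (fun h => ht' (C.subtype.isOfFinOrder h)) hnC
  have hs2 : (zpowers (s : G)).index ≤ 2 * n := by
    rw [index_zpowers_coe, mul_comm]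
    exact Nat.mul_le_mul (index_ker_le_two ε) hsn
  have : (zpowers (s : G)).FiniteIndex :=
    ⟨index_zpowers_coe s ▸ mul_ne_zero hs.index_ne_zero (finiteIndex_ker ε).index_ne_zero⟩
  obtain ⟨u, hu⟩ := exists_zpowers_eq_normalCore (s : G)
  exact ⟨u, hu ▸ inferInstance, hu ▸ inferInstance,
    hu ▸ (index_normalCore_le_factorial _).trans (Nat.factorial_le hs2)⟩

end IndexBound

def twistedMul {Q : Type*} (mul : Q → Q → Q) (ε : Q → ℤˣ) (c : Q → Q → ℤ) (p q : ℤ × Q) :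
    ℤ × Q :=
  (p.1 + ε p.2 * q.1 + c p.2 q.2, mul p.2 q.2)

section TwistedMul

variable {Q : Type*} {mul : Q → Q → Q} {ε : Q → ℤˣ} {c : Q → Q → ℤ}

theorem prodCongr_twistedMul {Q' : Type*} (e : Q ≃ Q') (p q : ℤ × Q) :
    Equiv.prodCongr (Equiv.refl ℤ) e (twistedMul mul ε c p q) =
      twistedMul (fun x y => e (mul (e.symm x) (e.symm y))) (fun x => ε (e.symm x))
        (fun x y => c (e.symm x) (e.symm y))
        (Equiv.prodCongr (Equiv.refl ℤ) e p) (Equiv.prodCongr (Equiv.refl ℤ) e q) := by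
  simp [twistedMul]

theorem twistedMul_cocycle {G : Type*} [Group G] {Φ : ℤ × Q → G} (hΦ : Injective Φ)
    (hmul : ∀ p q, Φ (twistedMul mul ε c p q) = Φ p * Φ q) (x y z : Q) :
    c x y + c (mul x y) z = ε x * c y z + c x (mul y z) := by
  have hassoc := @hΦ (twistedMul mul ε c (twistedMul mul ε c (0, x) (0, y)) (0, z))
    (twistedMul mul ε c (0, x) (twistedMul mul ε c (0, y) (0, z))) (by simp only [hmul, mul_assoc])
  simpa [twistedMul] using congrArg Prod.fst hassoc

theorem zpow_mul_twistedMul {G : Type*} [Group G] {t : G} {σ : Q → G}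
    (hcomm : ∀ q (k : ℤ), σ q * t ^ k = t ^ (ε q * k) * σ q)
    (hc : ∀ x y, σ x * σ y = t ^ c x y * σ (mul x y)) (p q : ℤ × Q) :
    t ^ (twistedMul mul ε c p q).1 * σ (twistedMul mul ε c p q).2 =
      t ^ p.1 * σ p.2 * (t ^ q.1 * σ q.2) := by
  calc _ = t ^ p.1 * t ^ (ε p.2 * q.1) * (t ^ c p.2 q.2 * σ (mul p.2 q.2)) := by
        simp only [twistedMul, zpow_add, mul_assoc]
    _ = t ^ p.1 * (t ^ (ε p.2 * q.1) * σ p.2) * σ q.2 := by rw [← hc]; group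
    _ = _ := by rw [← hcomm]; group

end TwistedMul

open Finset in
theorem exists_cocycle_add_coboundary_mem_Icc {Q : Type*} [Group Q] [Fintype Q] (ε : Q → ℤˣ)
    (c : Q → Q → ℤ) (hc : ∀ x y z, c x y + c (x * y) z = ε x * c y z + c x (y * z)) :
    ∃ b : Q → ℤ, ∀ x y, c x y + b x + ε x * b y - b (x * y) ∈ Set.Icc (-1 : ℤ) 1 := by
  set m : ℤ := (Fintype.card Q : ℤ)
  have hm : 0 < m := by simp [m, Fintype.card_pos]
  set B : Q → ℤ := fun x => ∑ z, c x z
  -- sum the cocycle identity over `z`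
  have hB (x y : Q) : m * c x y + B (x * y) = ε x * B y + B x := by
    have hsum := Finset.sum_congr rfl fun z (_ : z ∈ univ) => hc x y z
    rw [sum_add_distrib, sum_add_distrib, ← mul_sum, sum_const, card_univ, nsmul_eq_mul,
      show ∑ z, c x (y * z) = B x from Equiv.sum_comp (Equiv.mulLeft y) (c x)] at hsum
    exact hsum
  refine ⟨fun x => -(B x / m), fun x y => ?_⟩
  have hr (z : Q) := Int.emod_nonneg (B z) hm.ne'
  have hr' (z : Q) := Int.emod_lt_of_pos (B z) hm
  have hdiv (z : Q) := Int.emod_def (B z) m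
  have key : m * (c x y + -(B x / m) + ε x * -(B y / m) - -(B (x * y) / m)) =
      B x % m + ε x * (B y % m) - B (x * y) % m := by
    rw [hdiv, hdiv, hdiv]; linear_combination hB x y
  rcases Int.units_eq_one_or (ε x) with h | h <;>
    simp only [h, Units.val_one, Units.val_neg] at key ⊢ <;>
    constructor <;> nlinarith [hr x, hr y, hr (x * y), hr' x, hr' y, hr' (x * y)]

section Extension

variable {G : Type*} [Group G] {t : G}

theorem bijective_zpow_mul_section (ht : ¬IsOfFinOrder t) [(zpowers t).Normal]
    {σ : G ⧸ zpowers t → G} (hσ : ∀ q, (σ q : G ⧸ zpowers t) = q) :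
    Bijective fun p : ℤ × (G ⧸ zpowers t) => t ^ p.1 * σ p.2 := by
  have hmk (a : ℤ) (q : G ⧸ zpowers t) : ((t ^ a * σ q : G) : G ⧸ zpowers t) = q := by
    rw [QuotientGroup.mk_mul, (QuotientGroup.eq_one_iff _).mpr (zpow_mem_zpowers t a), one_mul,
      hσ]
  refine ⟨fun ⟨a, x⟩ ⟨b, y⟩ hab => ?_, fun g => ?_⟩
  · obtain rfl : x = y := by rw [← hmk a x, ← hmk b y]; exact congrArg _ hab
    simp only at hab
    rw [injective_zpow_iff_not_isOfFinOrder.mpr ht (mul_right_cancel hab)]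
  · have hg : g * (σ g)⁻¹ ∈ zpowers t := by
      rw [← QuotientGroup.eq_one_iff, QuotientGroup.mk_mul, QuotientGroup.mk_inv, hσ,
        mul_inv_cancel]
    obtain ⟨a, ha⟩ := mem_zpowers_iff.mp hg
    exact ⟨(a, g), by simp only [ha, inv_mul_cancel_right]⟩

theorem exists_equiv_twistedMul (ht : ¬IsOfFinOrder t) [(zpowers t).Normal]
    [(zpowers t).FiniteIndex] :
    ∃ (ε : G ⧸ zpowers t → ℤˣ) (c : G ⧸ zpowers t → G ⧸ zpowers t → ℤ),
      (∀ x y, c x y ∈ Set.Icc (-1) 1) ∧ ∃ f : G ≃ ℤ × (G ⧸ zpowers t),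
        ∀ a b, f (a * b) = twistedMul (· * ·) ε c (f a) (f b) := by
  obtain ⟨ε, hε⟩ := exists_units_conj_zpow ht
  set ε' := QuotientGroup.lift (zpowers t) ε (zpowers_le_ker_of_conj hε ht)
  have hcomm {σ : G ⧸ zpowers t → G} (hσ : ∀ q, (σ q : G ⧸ zpowers t) = q) (q : G ⧸ zpowers t)
      (k : ℤ) : σ q * t ^ k = t ^ (ε' q * k) * σ q := by
    rw [mul_zpow_eq_zpow_units_mul hε, ← hσ q, QuotientGroup.lift_mk, hσ]
  have hout (x y : G ⧸ zpowers t) : x.out * y.out * (x * y).out⁻¹ ∈ zpowers t := by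
    simp [← QuotientGroup.eq_one_iff]
  choose c hc using fun x y => mem_zpowers_iff.mp (hout x y)
  replace hc (x y : G ⧸ zpowers t) : x.out * y.out = t ^ c x y * (x * y).out := by
    rw [hc, inv_mul_cancel_right]
  have hcoc := twistedMul_cocycle (bijective_zpow_mul_section ht QuotientGroup.out_eq').1
    (zpow_mul_twistedMul (hcomm QuotientGroup.out_eq') hc)
  have := Fintype.ofFinite (G ⧸ zpowers t)
  obtain ⟨b, hb⟩ := exists_cocycle_add_coboundary_mem_Icc ε' c hcoc
  set σ : G ⧸ zpowers t → G := fun q => t ^ b q * q.out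
  have hσ (q : G ⧸ zpowers t) : (σ q : G ⧸ zpowers t) = q := by
    simp [σ, (QuotientGroup.eq_one_iff _).mpr (zpow_mem_zpowers t _)]
  have hσc (x y : G ⧸ zpowers t) :
      σ x * σ y = t ^ (c x y + b x + ε' x * b y - b (x * y)) * σ (x * y) := by
    calc σ x * σ y = t ^ b x * (x.out * t ^ b y) * y.out := by simp only [σ]; group
      _ = t ^ (b x + ε' x * b y) * (x.out * y.out) := by
        rw [hcomm QuotientGroup.out_eq', zpow_add]; group
      _ = _ := by rw [hc]; simp only [σ, zpow_add, zpow_sub]; group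
  set Φ := Equiv.ofBijective _ (bijective_zpow_mul_section ht hσ)
  refine ⟨ε', _, hb, Φ.symm, fun g h => Φ.injective ?_⟩
  rw [Φ.apply_symm_apply]
  exact ((zpow_mul_twistedMul (hcomm hσ) hσc _ _).trans
    (congrArg₂ (· * ·) (Φ.apply_symm_apply g) (Φ.apply_symm_apply h))).symm

end Extension

theorem exists_fin_family_of_equiv_mul {J : Type} [Finite J] (X : J → Type)
    (μ : ∀ j, X j → X j → X j) :
    ∃ (k : ℕ) (T : Fin k → Type) (_ : ∀ i, Group (T i)),
      ∀ (A : Type u) [Group A] (j : J) (f : A ≃ X j),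
        (∀ a b, f (a * b) = μ j (f a) (f b)) → ∃ i, Nonempty (A ≃* T i) := by
  let J' := {j : J // ∃ g : Group (X j), ∀ x y, (letI := g; x * y) = μ j x y}
  let e := Finite.equivFin J'
  let group (i : Fin (Nat.card J')) : Group (X (e.symm i).1) := (e.symm i).2.choose
  refine ⟨Nat.card J', fun i => X (e.symm i).1, group, fun A _ j f hf => ?_⟩
  have hj : ∃ g : Group (X j), ∀ x y, (letI := g; x * y) = μ j x y := by
    refine ⟨f.symm.group, fun x y => ?_⟩
    show f (f.symm x * f.symm y) = μ j x y
    rw [hf, f.apply_symm_apply, f.apply_symm_apply]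
  obtain ⟨i, hi⟩ := e.symm.surjective ⟨j, hj⟩
  obtain rfl : j = (e.symm i).1 := congrArg Subtype.val hi.symm
  exact ⟨i, ⟨{ f with map_mul' := fun a b => (hf a b).trans ((e.symm i).2.choose_spec _ _).symm }⟩⟩

section Codes

/-- A finite group of order `m ≤ M` is coded by its multiplication table on `Fin m`; a group with a
normal infinite cyclic subgroup of index `m ≤ M` by the table of the quotient, the sign of the
conjugation action and a cocycle with values in `{-1, 0, 1}` (see `twistedMul`). -/
def VirtuallyCyclicCode (M : ℕ) : Type :=
  (Σ m : Fin (M + 1), Fin m → Fin m → Fin m) ⊕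
    (Σ m : Fin (M + 1),
      (Fin m → Fin m → Fin m) × (Fin m → ℤˣ) × (Fin m → Fin m → Set.Icc (-1 : ℤ) 1))

variable {M : ℕ}

instance : Finite (VirtuallyCyclicCode M) := by
  unfold VirtuallyCyclicCode
  infer_instance

def VirtuallyCyclicCode.Carrier : VirtuallyCyclicCode M → Type
  | .inl ⟨m, _⟩ => Fin m
  | .inr ⟨m, _⟩ => ℤ × Fin m

def VirtuallyCyclicCode.mul : (j : VirtuallyCyclicCode M) → j.Carrier → j.Carrier → j.Carrier
  | .inl ⟨_, μ⟩ => μ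
  | .inr ⟨_, μ, ε, c⟩ => twistedMul μ ε fun x y => c x y

variable {A : Type*} [Group A]

theorem exists_code_of_card_le [Finite A] (hA : Nat.card A ≤ M) :
    ∃ (j : VirtuallyCyclicCode M) (f : A ≃ j.Carrier), ∀ a b, f (a * b) = j.mul (f a) (f b) := by
  have e := Finite.equivFin A
  exact ⟨.inl ⟨⟨Nat.card A, by omega⟩, fun x y => e (e.symm x * e.symm y)⟩, e,
    fun a b => congrArg e (congrArg₂ (· * ·) (e.symm_apply_apply a) (e.symm_apply_apply b)).symm⟩

theorem exists_code_of_zpowers_normal {t : A} (ht : ¬IsOfFinOrder t) [(zpowers t).Normal]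
    [(zpowers t).FiniteIndex] (hM : (zpowers t).index ≤ M) :
    ∃ (j : VirtuallyCyclicCode M) (f : A ≃ j.Carrier), ∀ a b, f (a * b) = j.mul (f a) (f b) := by
  obtain ⟨ε, c, hc, f, hf⟩ := exists_equiv_twistedMul ht
  have e := Finite.equivFin (A ⧸ zpowers t)
  refine ⟨.inr ⟨⟨Nat.card (A ⧸ zpowers t), by rw [← index_eq_card]; omega⟩,
    fun x y => e (e.symm x * e.symm y), fun x => ε (e.symm x),
    fun x y => ⟨c (e.symm x) (e.symm y), hc _ _⟩⟩, f.trans (Equiv.prodCongr (Equiv.refl ℤ) e),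
    fun a b => (congrArg (Equiv.prodCongr (Equiv.refl ℤ) e) (hf a b)).trans
      (prodCongr_twistedMul e _ _)⟩

end Codes

/-- For every `n`, there are only finitely many isomorphism classes of virtually
cyclic groups all of whose finite subgroups have order at most `n`. -/
theorem finitely_many_virtually_cyclic_groups (n : ℕ) :
    ∃ (k : ℕ) (T : Fin k → Type) (_ : ∀ i, Group (T i)),
      ∀ (A : Type u) (_ : Group A), IsVirtuallyCyclic A →
        (∀ K : Subgroup A, (K : Set A).Finite → Nat.card K ≤ n) →
        ∃ i, Nonempty (A ≃* T i) := by
  obtain ⟨k, T, _, hT⟩ := exists_fin_family_of_equiv_mul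
    (VirtuallyCyclicCode.Carrier (M := (2 * n).factorial)) VirtuallyCyclicCode.mul
  refine ⟨k, T, ‹_›, fun A _ hA hn => ?_⟩
  obtain ⟨j, f, hf⟩ : ∃ (j : VirtuallyCyclicCode (2 * n).factorial) (f : A ≃ j.Carrier),
      ∀ a b, f (a * b) = j.mul (f a) (f b) := by
    rcases finite_or_infinite A with hA' | hA'
    · refine exists_code_of_card_le ?_
      calc Nat.card A = Nat.card (⊤ : Subgroup A) := card_top.symm
        _ ≤ n := hn ⊤ (Set.toFinite _)
        _ ≤ (2 * n).factorial := (Nat.le_mul_of_pos_left n two_pos).trans (Nat.self_le_factorial _)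
    · obtain ⟨t, _, _, ht⟩ := hA.exists_zpowers_normal_index_le hn
      exact exists_code_of_zpowers_normal not_isOfFinOrder_of_finiteIndex ht
  exact hT A j f hf
end

section
/- Every infinite virtually cyclic group A admits a surjective homomorphism with finite kernel onto either the infinite cyclic group ℤ or the infinite dihedral group D∞. -/
open Subgroup

section
variable {G : Type*} [Group G]

theorem Subgroup.finite_of_disjoint_of_finiteIndex {H K : Subgroup G} [H.FiniteIndex]
    (h : Disjoint H K) : (K : Set G).Finite := by
  have hbot : H.subgroupOf K = ⊥ := subgroupOf_eq_bot.mpr h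
  have : (H.subgroupOf K).index ≠ 0 := FiniteIndex.index_ne_zero
  rw [hbot, index_bot] at this
  exact Set.finite_coe_iff.mp (Nat.finite_of_card_ne_zero this)

theorem MonoidHom.eq_one_of_finiteIndex_ker {M : Type*} [Group M] [IsMulTorsionFree M]
    (f : G →* M) [f.ker.FiniteIndex] : f = 1 := by
  ext g
  obtain ⟨n, hn, hgn⟩ := f.ker.exists_pow_mem_of_index_ne_zero FiniteIndex.index_ne_zero g
  rw [MonoidHom.mem_ker, map_pow] at hgn
  exact (pow_eq_one_iff_left hn.ne').mp hgn.2

theorem MonoidHom.map_eq_inv_of_map_eq_inv {M : Type*} [CommGroup M] [IsMulTorsionFree M]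
    {z : G} [(zpowers z).FiniteIndex] (c : G →* M) (σ : G →* G) (hσ : σ z = z⁻¹) (g : G) :
    c (σ g) = (c g)⁻¹ := by
  have hz : z ∈ (c * c.comp σ).ker := by simp [hσ]
  have : (c * c.comp σ).ker.FiniteIndex := finiteIndex_of_le (zpowers_le.mpr hz)
  have h := DFunLike.congr_fun (c * c.comp σ).eq_one_of_finiteIndex_ker g
  exact eq_inv_of_mul_eq_one_right (by simpa using h)

theorem exists_surjective_int_of_finite_ker [Infinite G] {C : Type*} [Group C] [IsCyclic C]
    (f : G →* C) (hf : (f.ker : Set G).Finite) :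
    ∃ g : G →* Multiplicative ℤ, Function.Surjective g ∧ (g.ker : Set G).Finite := by
  have : Infinite f.range := by
    rw [← not_finite_iff_infinite]
    exact fun h ↦ Finite.false <| f.finite_iff_finite_ker_range.mpr ⟨hf.to_subtype, h⟩
  refine ⟨(intCyclicMulEquiv.symm : f.range ≃* _).toMonoidHom.comp f.rangeRestrict,
    intCyclicMulEquiv.symm.surjective.comp f.rangeRestrict_surjective, ?_⟩
  rwa [MonoidHom.ker_comp_of_injective _ _ (MulEquiv.injective _), f.ker_rangeRestrict]

open scoped IsMulCommutative in
theorem exists_finite_ker_hom_zpowers_of_mem_center {z : G} (hz : z ∈ center G)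
    (hz_ord : ¬IsOfFinOrder z) [(zpowers z).FiniteIndex] :
    ∃ f : G →* zpowers z, (f.ker : Set G).Finite := by
  have hle : zpowers z ≤ center G := zpowers_le.mpr hz
  have : (center G).FiniteIndex := finiteIndex_of_le hle
  have : (zpowers z).Normal :=
    ⟨fun a ha g ↦ by rwa [mem_center_iff.mp (hle ha) g, mul_inv_cancel_right]⟩
  set N := (center G).index * (zpowers z).index
  have hN : N ≠ 0 := mul_ne_zero FiniteIndex.index_ne_zero FiniteIndex.index_ne_zero
  let φ : G →* G := (center G).subtype.comp ((powMonoidHom (zpowers z).index).comp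
    (MonoidHom.transferCenterPow G))
  have hφ (g : G) : φ g = g ^ N := by
    simp [φ, N, MonoidHom.transferCenterPow_apply, pow_mul]
  refine ⟨φ.codRestrict _ fun g ↦ hφ g ▸ pow_mul g _ _ ▸ pow_index_mem _ _, ?_⟩
  rw [MonoidHom.ker_codRestrict]
  refine finite_of_disjoint_of_finiteIndex (H := zpowers z) (disjoint_def.mpr ?_)
  rintro _ ⟨k, rfl⟩ hk
  rw [MonoidHom.mem_ker, hφ, ← zpow_natCast, ← zpow_mul, ← zpow_zero z] at hk
  have hk0 : k = 0 :=
    (mul_eq_zero.mp (injective_zpow_iff_not_isOfFinOrder.mpr hz_ord hk)).resolve_right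
      (by exact_mod_cast hN)
  simp [hk0]

theorem exists_surjective_int_of_mem_center {z : G} (hz : z ∈ center G)
    (hz_ord : ¬IsOfFinOrder z) [(zpowers z).FiniteIndex] :
    ∃ f : G →* Multiplicative ℤ, Function.Surjective f ∧ (f.ker : Set G).Finite := by
  have : Infinite G :=
    Set.infinite_univ_iff.mp ((infinite_zpowers.mpr hz_ord).mono (Set.subset_univ _))
  obtain ⟨f, hf⟩ := exists_finite_ker_hom_zpowers_of_mem_center hz hz_ord
  exact exists_surjective_int_of_finite_ker f hf

end

section
variable {G : Type*} [Group G] {x : G}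

theorem conj_eq_self_or_inv (hx : ¬IsOfFinOrder x) [hN : (zpowers x).Normal] (a : G) :
    a * x * a⁻¹ = x ∨ a * x * a⁻¹ = x⁻¹ := by
  obtain ⟨k, hk⟩ := mem_zpowers_iff.mp (hN.conj_mem x (mem_zpowers x) a)
  obtain ⟨j, hj⟩ := mem_zpowers_iff.mp (hN.conj_mem x (mem_zpowers x) a⁻¹)
  have hkj : k * j = 1 := injective_zpow_iff_not_isOfFinOrder.mpr hx <| by
    calc x ^ (k * j) = (a⁻¹ * x * a⁻¹⁻¹) ^ k := by rw [mul_comm, zpow_mul, hj]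
      _ = a⁻¹ * (a * x * a⁻¹) * a := by rw [conj_zpow, hk, inv_inv]
      _ = x ^ (1 : ℤ) := by group
  rcases Int.eq_one_or_neg_one_of_mul_eq_one hkj with rfl | rfl
  · exact .inl (by simpa using hk.symm)
  · exact .inr (by simpa using hk.symm)

theorem mem_centralizer_singleton_iff_conj {a : G} :
    a ∈ centralizer {x} ↔ a * x * a⁻¹ = x := by
  rw [mem_centralizer_singleton_iff, mul_inv_eq_iff_eq_mul]

theorem index_centralizer_eq_two (hx : ¬IsOfFinOrder x) [(zpowers x).Normal] {t : G}
    (ht : t ∉ centralizer {x}) : (centralizer {x}).index = 2 := by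
  have hx_inv : x ≠ x⁻¹ := fun h ↦ by
    have := injective_zpow_iff_not_isOfFinOrder.mpr hx (a₁ := 1) (a₂ := -1) (by simpa using h)
    omega
  have htx : t * x * t⁻¹ = x⁻¹ :=
    (conj_eq_self_or_inv hx t).resolve_left (mem_centralizer_singleton_iff_conj.not.mp ht)
  refine index_eq_two_iff.mpr ⟨t, fun b ↦ ?_⟩
  have hbt : b * t * x * (b * t)⁻¹ = (b * x * b⁻¹)⁻¹ := by
    rw [show b * t * x * (b * t)⁻¹ = b * (t * x * t⁻¹) * b⁻¹ by group, htx]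
    group
  rw [mem_centralizer_singleton_iff_conj, mem_centralizer_singleton_iff_conj, hbt,
    inv_eq_iff_eq_inv]
  rcases conj_eq_self_or_inv hx b with h | h <;> simp [h, hx_inv, hx_inv.symm]

end

section Dihedral
variable {A : Type*} [Group A]

def dihedralHomOfIndexTwo {P : Subgroup A} [DecidablePred (· ∈ P)] (hP : P.index = 2)
    (e : A → ℤ) (he : ∀ a b, e (a * b) = (if b ∈ P then e a else -e a) + e b) :
    A →* DihedralGroup 0 where
  toFun a := if a ∈ P then .r (e a) else .sr (e a)
  map_one' := by
    have : e 1 = 0 := by simpa [P.one_mem] using he 1 1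
    simp only [P.one_mem, if_true, this]
    rfl
  map_mul' a b := by
    -- `ZMod 0` is `ℤ` only up to unfolding, so the multiplication rules are applied by hand.
    by_cases ha : a ∈ P <;> by_cases hb : b ∈ P <;>
      simp only [ha, hb, he, mul_mem_iff_of_index_two hP, if_true, if_false, iff_self, iff_false,
        false_iff]
    · exact (DihedralGroup.r_mul_r _ _).symm
    · exact ((DihedralGroup.r_mul_sr _ _).trans (congrArg _ (sub_eq_neg_add _ _))).symm
    · exact (DihedralGroup.sr_mul_r _ _).symm
    · exact ((DihedralGroup.sr_mul_sr _ _).trans (congrArg _ (sub_eq_neg_add _ _))).symm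

section
variable {P : Subgroup A} [DecidablePred (· ∈ P)] {hP : P.index = 2} {e : A → ℤ}
  {he : ∀ a b, e (a * b) = (if b ∈ P then e a else -e a) + e b}

theorem mem_ker_dihedralHomOfIndexTwo {a : A} :
    a ∈ (dihedralHomOfIndexTwo hP e he).ker ↔ a ∈ P ∧ e a = 0 := by
  change (if a ∈ P then DihedralGroup.r (n := 0) (e a) else .sr (e a)) = .r 0 ↔ _
  by_cases ha : a ∈ P
  · rw [if_pos ha]
    exact ⟨fun h ↦ ⟨ha, DihedralGroup.r.inj h⟩, fun h ↦ congrArg _ h.2⟩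
  · rw [if_neg ha]
    exact ⟨nofun, fun h ↦ (ha h.1).elim⟩

theorem dihedralHomOfIndexTwo_surjective (h : ∀ k, (∃ a ∈ P, e a = k) ∧ ∃ a ∉ P, e a = k) :
    Function.Surjective (dihedralHomOfIndexTwo hP e he) := by
  rintro (k | k)
  · obtain ⟨a, ha, rfl⟩ := (h k).1
    exact ⟨a, if_pos ha⟩
  · obtain ⟨a, ha, rfl⟩ := (h k).2
    exact ⟨a, if_neg ha⟩

end

def extendAcrossIndexTwo (P : Subgroup A) [DecidablePred (· ∈ P)] (t : A) (c : A → ℤ)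
    (a : A) : ℤ :=
  if a ∈ P then c a else c (t * a)

theorem extendAcrossIndexTwo_mul {P : Subgroup A} [DecidablePred (· ∈ P)] (hP : P.index = 2)
    {t : A} (ht : t ∉ P) {c : A → ℤ} (hc_mul : ∀ a ∈ P, ∀ b ∈ P, c (a * b) = c a + c b)
    (hc_conj : ∀ a ∈ P, c (t * a * t⁻¹) = -c a) (a b : A) :
    extendAcrossIndexTwo P t c (a * b) =
      (if b ∈ P then extendAcrossIndexTwo P t c a else -extendAcrossIndexTwo P t c a) +
        extendAcrossIndexTwo P t c b := by
  have hmem {x y : A} : x * y ∈ P ↔ (x ∈ P ↔ y ∈ P) := mul_mem_iff_of_index_two hP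
  have htP (x : A) : t * x ∈ P ↔ x ∉ P := by simp [hmem, ht]
  by_cases ha : a ∈ P <;> by_cases hb : b ∈ P <;>
    simp only [extendAcrossIndexTwo, hmem, ha, hb, iff_self, iff_false, false_iff,
      not_true_eq_false, if_true, if_false]
  · exact hc_mul a ha b hb
  · have hta : t * a * t⁻¹ ∈ P := by simp [hmem, ha, ht]
    rw [show t * (a * b) = t * a * t⁻¹ * (t * b) by group,
      hc_mul _ hta _ ((htP b).mpr hb), hc_conj a ha]
  · rw [← mul_assoc, hc_mul _ ((htP a).mpr ha) b hb]
  · have hat : a * t ∈ P := by simp [hmem, ha, ht]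
    have htt : t⁻¹ * t⁻¹ ∈ P := by simp [hmem, ht]
    have hc_tt : c (t⁻¹ * t⁻¹) = 0 := by
      have := hc_conj _ htt
      rw [show t * (t⁻¹ * t⁻¹) * t⁻¹ = t⁻¹ * t⁻¹ by group] at this
      omega
    have hc_at : c (t * a) = -c (a * t) := by simpa [mul_assoc] using hc_conj _ hat
    rw [show a * b = a * t * (t⁻¹ * t⁻¹) * (t * b) by group,
      hc_mul _ (P.mul_mem hat htt) _ ((htP b).mpr hb), hc_mul _ hat _ htt, hc_tt, hc_at]
    ring

theorem exists_surjective_dihedral_of_index_two {P : Subgroup A} (hP : P.index = 2) {t : A}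
    (ht : t ∉ P) (c : P →* Multiplicative ℤ) (hc_surj : Function.Surjective c)
    (hc_ker : (c.ker : Set P).Finite)
    (hc_conj : ∀ p q : P, (q : A) = t * p * t⁻¹ → c q = (c p)⁻¹) :
    ∃ f : A →* DihedralGroup 0, Function.Surjective f ∧ (f.ker : Set A).Finite := by
  classical
  let c' : A → ℤ := fun a ↦ if h : a ∈ P then (c ⟨a, h⟩).toAdd else 0
  have hc' (p : P) : c' p = (c p).toAdd := dif_pos p.2
  have hc'_mul : ∀ a ∈ P, ∀ b ∈ P, c' (a * b) = c' a + c' b := fun a ha b hb ↦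
    (hc' (⟨a, ha⟩ * ⟨b, hb⟩)).trans (by rw [map_mul, toAdd_mul, ← hc', ← hc'])
  have hc'_conj : ∀ a ∈ P, c' (t * a * t⁻¹) = -c' a := fun a ha ↦ by
    have hmem : t * a * t⁻¹ ∈ P := (normal_of_index_eq_two hP).conj_mem a ha t
    rw [hc' ⟨_, hmem⟩, hc' ⟨a, ha⟩, hc_conj ⟨a, ha⟩ ⟨_, hmem⟩ rfl, toAdd_inv]
  refine ⟨dihedralHomOfIndexTwo hP _ (extendAcrossIndexTwo_mul hP ht hc'_mul hc'_conj),
    dihedralHomOfIndexTwo_surjective fun k ↦ ?_, ?_⟩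
  · obtain ⟨p, hp⟩ := hc_surj (.ofAdd k)
    have hpk : c' p = k := by rw [hc', hp, toAdd_ofAdd]
    have htp : t⁻¹ * p ∉ P := by simp [mul_mem_iff_of_index_two hP, ht]
    refine ⟨⟨p, p.2, by simp [extendAcrossIndexTwo, hpk]⟩, t⁻¹ * p, htp, ?_⟩
    simp [extendAcrossIndexTwo, htp, hpk]
  · refine (hc_ker.image Subtype.val).subset fun a ha ↦ ?_
    obtain ⟨haP, ha0⟩ := mem_ker_dihedralHomOfIndexTwo.mp ha
    simp only [extendAcrossIndexTwo, haP, if_true, hc' ⟨a, haP⟩] at ha0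
    exact ⟨⟨a, haP⟩, toAdd_eq_zero.mp ha0, rfl⟩

theorem exists_surjective_dihedral_of_notMem_center {x : A} (hx : ¬IsOfFinOrder x)
    [(zpowers x).Normal] [(zpowers x).FiniteIndex] (hx_cen : x ∉ center A) :
    ∃ f : A →* DihedralGroup 0, Function.Surjective f ∧ (f.ker : Set A).Finite := by
  set P := centralizer {x}
  obtain ⟨t, ht⟩ : ∃ t, t ∉ P := by
    simpa [P, mem_center_iff, mem_centralizer_singleton_iff, eq_comm] using hx_cen
  have hP : P.index = 2 := index_centralizer_eq_two hx ht
  have : P.Normal := normal_of_index_eq_two hP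
  let x' : P := ⟨x, mem_centralizer_singleton_iff.mpr rfl⟩
  have hx'_cen : x' ∈ center P :=
    mem_center_iff.mpr fun p ↦ Subtype.ext (mem_centralizer_singleton_iff.mp p.2)
  have : (zpowers x').FiniteIndex := by
    refine ⟨fun h ↦ FiniteIndex.index_ne_zero (H := zpowers x) ?_⟩
    change (zpowers (P.subtype x')).index = 0
    rw [← P.subtype.map_zpowers, index_map_subtype, h, zero_mul]
  obtain ⟨c, hc_surj, hc_ker⟩ :=
    exists_surjective_int_of_mem_center hx'_cen fun h ↦ hx (P.subtype.isOfFinOrder h)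
  refine exists_surjective_dihedral_of_index_two hP ht c hc_surj hc_ker fun p q hq ↦ ?_
  have hσ : MulAut.conjNormal t x' = x'⁻¹ := Subtype.ext <|
    (conj_eq_self_or_inv hx t).resolve_left (mem_centralizer_singleton_iff_conj.not.mp ht)
  rw [show q = MulAut.conjNormal t p from Subtype.ext hq]
  exact c.map_eq_inv_of_map_eq_inv (MulAut.conjNormal t).toMonoidHom hσ p

end Dihedral

theorem IsVirtuallyCyclic.exists_normal_zpowers {G : Type*} [Group G] [Infinite G]
    (h : IsVirtuallyCyclic G) :
    ∃ x : G, ¬IsOfFinOrder x ∧ (zpowers x).Normal ∧ (zpowers x).FiniteIndex := by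
  obtain ⟨H, _, _⟩ := h
  have : IsCyclic H.normalCore := isCyclic_of_le H.normalCore_le
  obtain ⟨x, hx⟩ := (Subgroup.isCyclic_iff_exists_zpowers_eq_top _).mp this
  have hfi : (zpowers x).FiniteIndex := hx ▸ finiteIndex_normalCore H
  refine ⟨x, fun hfin ↦ ?_, hx ▸ normalCore_normal H, hfi⟩
  have : Finite (zpowers x) := (finite_zpowers.mpr hfin).to_subtype
  exact Finite.false ((finite_iff_finite_and_finiteIndex _).mpr ⟨this, hfi⟩)

/-- Every infinite virtually cyclic group surjects with finite kernel onto `ℤ` or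
onto the infinite dihedral group `D∞` (= `DihedralGroup 0`). -/
theorem infinite_virtually_cyclic_maps_onto_Z_or_Dinfty
    (A : Type*) [Group A] [Infinite A] (hA : IsVirtuallyCyclic A) :
    (∃ f : A →* Multiplicative ℤ, Function.Surjective f ∧ (f.ker : Set A).Finite) ∨
    (∃ f : A →* DihedralGroup 0, Function.Surjective f ∧ (f.ker : Set A).Finite) := by
  obtain ⟨x, hx, _, _⟩ := hA.exists_normal_zpowers
  by_cases hx_cen : x ∈ center A
  · exact .inl (exists_surjective_int_of_mem_center hx_cen hx)
  · exact .inr (exists_surjective_dihedral_of_notMem_center hx hx_cen)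
end

section
/- Let A and B be virtually cyclic groups and n a natural number. Then there are only finitely many injective homomorphisms i : A → B with [B : i(A)] ≤ n, up to precomposition by inner automorphisms of A. -/
/-!
`B` is finitely generated, so it has only finitely many subgroups of index at most `n`, and two
monomorphisms `A → B` with the same image differ by an automorphism of `A`. It therefore suffices
that `Out(A)` is finite. For finite `A` this is clear. Otherwise, if `H` is a cyclic subgroup of
finite index, the intersection of the finitely many subgroups with the index of `H` is a
characteristic infinite cyclic subgroup `⟨u⟩` of finite index. Every automorphism sends `u` to `u^{±1}` and permutes the
finitely many cosets of `⟨u⟩`, so the automorphisms fixing `u` and acting trivially on `A ⧸ ⟨u⟩`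
have finite index. Such a `γ` fixes every `x` commuting with `u` (as `x^m ∈ ⟨u⟩` and `⟨u⟩` is
torsion-free), and `x⁻¹ γ x` is the same for all `x` inverting `u`; composing with conjugation
by a power of `u` shifts that value by an even power of `u`, leaving only two possibilities.
-/

open Subgroup

theorem MonoidHom.finite_of_fg {G H : Type*} [Group G] [Group H] [hG : Group.FG G] [Finite H] :
    Finite (G →* H) := by
  obtain ⟨S, hS, hSfin⟩ := Group.fg_iff.mp hG
  have := hSfin.to_subtype
  exact Finite.of_injective (fun φ : G →* H => fun s : S => φ s) fun φ ψ h =>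
    MonoidHom.eq_of_eqOn_dense hS fun x hx => congrFun h ⟨x, hx⟩

theorem Group.fg_of_finiteIndex {G : Type*} [Group G] {H : Subgroup G} [H.FiniteIndex]
    (hH : H.FG) : Group.FG G := by
  obtain ⟨S, hS⟩ := hH
  refine Group.fg_iff.mpr ⟨S ∪ Set.range fun q : G ⧸ H => q.out, eq_top_iff.mpr fun g _ => ?_,
    S.finite_toSet.union (Set.finite_range _)⟩
  obtain ⟨⟨h, hh⟩, hg⟩ := QuotientGroup.mk_out_eq_mul H g
  have hH : H ≤ closure (S ∪ Set.range fun q : G ⧸ H => q.out) :=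
    hS ▸ closure_mono Set.subset_union_left
  rw [eq_mul_inv_of_mul_eq hg.symm]
  exact mul_mem (subset_closure (Set.subset_union_right ⟨_, rfl⟩)) (inv_mem (hH hh))

namespace Subgroup

variable {G : Type*} [Group G]

theorem finiteIndex_of_forall_exists_inv_mul_mem {H : Subgroup G} {S : Set G} (hS : S.Finite)
    (h : ∀ g, ∃ s ∈ S, s⁻¹ * g ∈ H) : H.FiniteIndex := by
  have hsurj : Set.univ ⊆ (QuotientGroup.mk '' S : Set (G ⧸ H)) := by
    rintro q -
    induction q using QuotientGroup.induction_on with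
    | H g =>
      obtain ⟨s, hs, hsg⟩ := h g
      exact ⟨s, hs, QuotientGroup.eq.mpr hsg⟩
  have := Set.finite_univ_iff.mp ((hS.image _).subset hsurj)
  exact finiteIndex_of_finite_quotient

theorem finiteIndex_of_finiteIndex_of_forall_exists_inv_mul_mem {H : Subgroup G} (K : Subgroup G)
    [K.FiniteIndex] {S : Set G} (hS : S.Finite) (h : ∀ k ∈ K, ∃ s ∈ S, s⁻¹ * k ∈ H) :
    H.FiniteIndex := by
  refine finiteIndex_of_forall_exists_inv_mul_mem ((Set.finite_range fun q : G ⧸ K => q.out).mul hS)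
    fun g => ?_
  obtain ⟨⟨k, hk⟩, hgk⟩ := QuotientGroup.mk_out_eq_mul K g
  obtain ⟨s, hs, hsk⟩ := h k⁻¹ (inv_mem hk)
  refine ⟨(g : G ⧸ K).out * s, Set.mul_mem_mul ⟨_, rfl⟩ hs, ?_⟩
  rwa [hgk, mul_inv_rev, mul_assoc, mul_inv_rev, inv_mul_cancel_right]

theorem finiteIndex_of_finite_range {H : Subgroup G} {X : Type*} (f : G → X)
    (hf : (Set.range f).Finite) (h : ∀ g g', f g = f g' → g⁻¹ * g' ∈ H) : H.FiniteIndex :=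
  finiteIndex_of_forall_exists_inv_mul_mem (hf.image (Function.invFun f)) fun g =>
    ⟨_, ⟨_, ⟨g, rfl⟩, rfl⟩, h _ _ (Function.invFun_eq ⟨g, rfl⟩)⟩

theorem exists_comap_stabilizer_eq (K : Subgroup G) [K.FiniteIndex] :
    ∃ (ρ : G →* Equiv.Perm (Fin K.index)) (i : Fin K.index),
      (MulAction.stabilizer _ i).comap ρ = K := by
  let e : G ⧸ K ≃ Fin K.index := Finite.equivFin _
  refine ⟨e.permCongrHom.toMonoidHom.comp (MulAction.toPermHom G (G ⧸ K)), e (1 : G), ?_⟩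
  ext g
  simp only [mem_comap, MulAction.mem_stabilizer_iff]
  simp [Equiv.permCongr_apply, QuotientGroup.eq]

theorem finite_setOf_finiteIndex_index_le [Group.FG G] (n : ℕ) :
    {K : Subgroup G | K.FiniteIndex ∧ K.index ≤ n}.Finite := by
  have hsub : {K : Subgroup G | K.FiniteIndex ∧ K.index ≤ n} ⊆
      ⋃ d ∈ Set.Iic n, Set.range fun p : (G →* Equiv.Perm (Fin d)) × Fin d =>
        (MulAction.stabilizer _ p.2).comap p.1 := by
    rintro K ⟨hK, hKn⟩
    obtain ⟨ρ, i, hρ⟩ := K.exists_comap_stabilizer_eq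
    exact Set.mem_biUnion hKn ⟨(ρ, i), hρ⟩
  refine ((Set.finite_Iic n).biUnion fun d _ => ?_).subset hsub
  have := MonoidHom.finite_of_fg (G := G) (H := Equiv.Perm (Fin d))
  exact Set.finite_range _

theorem exists_characteristic_finiteIndex_le [Group.FG G] (H : Subgroup G) [H.FiniteIndex] :
    ∃ K ≤ H, K.Characteristic ∧ K.FiniteIndex := by
  let S := {K : Subgroup G | K.index = H.index}
  have hS : S.Finite := (finite_setOf_finiteIndex_index_le H.index).subset fun K hK =>
    ⟨finiteIndex_iff.mpr (hK.trans_ne FiniteIndex.index_ne_zero), hK.le⟩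
  have := hS.to_subtype
  refine ⟨sInf S, sInf_le rfl, characteristic_iff_le_comap.mpr fun ϕ g hg => ?_, ?_⟩
  · exact mem_sInf.mpr fun K hK =>
      mem_sInf.mp hg _ ((K.index_comap_of_surjective ϕ.surjective).trans hK)
  · rw [sInf_eq_iInf']
    exact finiteIndex_iInf fun K => finiteIndex_iff.mpr (K.2.trans_ne FiniteIndex.index_ne_zero)

end Subgroup

section

variable {A : Type*} [Group A] {u : A}

theorem MulAut.apply_eq_or_eq_inv (hu : ¬IsOfFinOrder u) [(zpowers u).Characteristic]
    (e : MulAut A) : e u = u ∨ e u = u⁻¹ := by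
  have h : zpowers (e.toMonoidHom u) = zpowers u := by
    rw [← MonoidHom.map_zpowers, characteristic_iff_map_eq.mp ‹_› e]
  exact ((zpowers_eq_zpowers_iff hu).mp h.symm).imp Eq.symm Eq.symm

theorem semiconjBy_inv_of_not_commute (hu : ¬IsOfFinOrder u) [(zpowers u).Characteristic] {x : A}
    (hx : ¬Commute x u) : SemiconjBy x u u⁻¹ := by
  rcases MulAut.apply_eq_or_eq_inv hu (MulAut.conj x) with h | h <;>
    rw [MulAut.conj_apply, mul_inv_eq_iff_eq_mul] at h
  · exact absurd h hx
  · exact h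

namespace MulAut

def fixingModZPowers (u : A) : Subgroup (MulAut A) where
  carrier := {γ | γ u = u ∧ ∀ x, x⁻¹ * γ x ∈ zpowers u}
  one_mem' := ⟨rfl, fun x => by simp⟩
  mul_mem' := by
    rintro γ γ' ⟨hγu, hγ⟩ ⟨hγ'u, hγ'⟩
    refine ⟨by simp [hγ'u, hγu], fun x => ?_⟩
    simpa [mul_assoc] using mul_mem (hγ' x) (hγ (γ' x))
  inv_mem' := by
    rintro γ ⟨hγu, hγ⟩
    refine ⟨by simpa using (congrArg γ.symm hγu).symm, fun x => ?_⟩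
    simpa using inv_mem (hγ (γ⁻¹ x))

theorem apply_eq_self_of_mem_zpowers {γ : MulAut A} (hγ : γ ∈ fixingModZPowers u) {c : A}
    (hc : c ∈ zpowers u) : γ c = c := by
  obtain ⟨k, rfl⟩ := mem_zpowers_iff.mp hc
  rw [map_zpow, hγ.1]

theorem conj_zpow_mem_fixingModZPowers [(zpowers u).Normal] (j : ℤ) :
    conj (u ^ j) ∈ fixingModZPowers u := by
  refine ⟨by rw [conj_apply, ((Commute.refl u).zpow_left j).eq, mul_inv_cancel_right], fun x => ?_⟩
  have h := ‹(zpowers u).Normal›.conj_mem _ (zpow_mem_zpowers u j) x⁻¹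
  rw [inv_inv] at h
  convert mul_mem h (inv_mem (zpow_mem_zpowers u j)) using 1
  rw [conj_apply]
  group

theorem finiteIndex_fixingModZPowers (hu : ¬IsOfFinOrder u) [hC : (zpowers u).Characteristic]
    [(zpowers u).FiniteIndex] : (fixingModZPowers u).FiniteIndex := by
  let induced (α : MulAut A) : A ⧸ zpowers u → A ⧸ zpowers u :=
    QuotientGroup.map _ _ α.toMonoidHom (characteristic_iff_le_comap.mp hC α)
  refine Subgroup.finiteIndex_of_finite_range (fun α => (α u, induced α)) ?_ ?_
  · refine (((Set.finite_singleton u⁻¹).insert u).prod Set.finite_univ).subset ?_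
    rintro _ ⟨α, rfl⟩
    exact ⟨apply_eq_or_eq_inv hu α, trivial⟩
  · intro α β h
    obtain ⟨hαβ, hind⟩ := Prod.ext_iff.mp h
    refine ⟨by simp [← show α u = β u from hαβ], fun x => ?_⟩
    have hx : (α x)⁻¹ * β x ∈ zpowers u := QuotientGroup.eq.mp (congrFun hind x)
    simpa using characteristic_iff_le_comap.mp hC α⁻¹ hx

theorem apply_eq_self_of_commute (hu : ¬IsOfFinOrder u) [(zpowers u).FiniteIndex] {γ : MulAut A}
    (hγ : γ ∈ fixingModZPowers u) {x : A} (hx : Commute x u) : γ x = x := by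
  obtain ⟨k, hk⟩ := mem_zpowers_iff.mp (hγ.2 x)
  obtain ⟨m, hm, -, hxm⟩ := (zpowers u).exists_pow_mem_of_index_ne_zero FiniteIndex.index_ne_zero x
  have hγx : γ x = x * u ^ k := by rw [hk, mul_inv_cancel_left]
  have hkm : u ^ (k * m) = u ^ (0 : ℤ) := by
    have := apply_eq_self_of_mem_zpowers hγ hxm
    rw [map_pow, hγx, (hx.zpow_right k).mul_pow, mul_eq_left] at this
    rw [zpow_mul, zpow_natCast, this, zpow_zero]
  have hk0 : k = 0 := by
    simpa [hm.ne'] using injective_zpow_iff_not_isOfFinOrder.mpr hu hkm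
  rw [hγx, hk0, zpow_zero, mul_one]

theorem inv_mul_apply_eq_of_not_commute (hu : ¬IsOfFinOrder u) [(zpowers u).Characteristic]
    [(zpowers u).FiniteIndex] {γ : MulAut A} (hγ : γ ∈ fixingModZPowers u) {t t' : A}
    (ht : ¬Commute t u) (ht' : ¬Commute t' u) : t⁻¹ * γ t = t'⁻¹ * γ t' := by
  set s := t'⁻¹ * t
  have hs : Commute s u :=
    (semiconjBy_inv_of_not_commute hu ht').inv_symm_left.mul_left
      (semiconjBy_inv_of_not_commute hu ht)
  obtain ⟨k, hk⟩ := mem_zpowers_iff.mp (hγ.2 t')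
  have hts : t = t' * s := by simp [s]
  calc t⁻¹ * γ t = s⁻¹ * (t'⁻¹ * γ t') * s := by
        rw [hts, map_mul, apply_eq_self_of_commute hu hγ hs]; group
    _ = t'⁻¹ * γ t' := by rw [← hk, mul_assoc, ← (hs.zpow_right k).eq, inv_mul_cancel_left]

theorem eq_of_apply_eq_of_not_commute (hu : ¬IsOfFinOrder u) [(zpowers u).Characteristic]
    [(zpowers u).FiniteIndex] {γ γ' : MulAut A} (hγ : γ ∈ fixingModZPowers u)
    (hγ' : γ' ∈ fixingModZPowers u) {t : A} (ht : ¬Commute t u) (h : γ t = γ' t) : γ = γ' := by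
  ext x
  by_cases hx : Commute x u
  · rw [apply_eq_self_of_commute hu hγ hx, apply_eq_self_of_commute hu hγ' hx]
  · have := (inv_mul_apply_eq_of_not_commute hu hγ hx ht).trans
      (h ▸ inv_mul_apply_eq_of_not_commute hu hγ' ht hx)
    exact mul_left_cancel this

theorem eq_one_of_forall_commute (hu : ¬IsOfFinOrder u) [(zpowers u).FiniteIndex]
    {γ : MulAut A} (hγ : γ ∈ fixingModZPowers u) (h : ∀ x, Commute x u) : γ = 1 :=
  MulEquiv.ext fun x => apply_eq_self_of_commute hu hγ (h x)

theorem exists_mul_conj_zpow_apply (hu : ¬IsOfFinOrder u) [(zpowers u).Characteristic]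
    {γ : MulAut A} (hγ : γ ∈ fixingModZPowers u) {t : A} (ht : ¬Commute t u) :
    ∃ j : ℤ, (γ * conj (u ^ j)) t = t ∨ (γ * conj (u ^ j)) t = t * u := by
  obtain ⟨k, hk⟩ := mem_zpowers_iff.mp (hγ.2 t)
  refine ⟨k / 2, ?_⟩
  have hshift : ∀ j : ℤ, (γ * conj (u ^ j)) t = t * u ^ (k - 2 * j) := fun j => by
    have hswap : u ^ j * t = t * u ^ (-j) := by
      simpa using ((semiconjBy_inv_of_not_commute hu ht).zpow_right (-j)).eq.symm
    rw [mul_apply, conj_apply, map_mul, map_mul, map_inv,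
      apply_eq_self_of_mem_zpowers hγ (zpow_mem_zpowers u j), ← mul_inv_cancel_left t (γ t), ← hk,
      ← mul_assoc, hswap, mul_assoc, ← zpow_neg, ← zpow_add, mul_assoc, ← zpow_add]
    ring_nf
  rw [hshift, ← Int.emod_def]
  rcases Int.emod_two_eq_zero_or_one k with h | h <;> simp [h]

theorem exists_finite_forall_exists_inv_mul_mem_range_conj (hu : ¬IsOfFinOrder u)
    [(zpowers u).Characteristic] [(zpowers u).FiniteIndex] :
    ∃ S : Set (MulAut A), S.Finite ∧
      ∀ γ ∈ fixingModZPowers u, ∃ s ∈ S, s⁻¹ * γ ∈ (conj : A →* MulAut A).range := by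
  by_cases hcomm : ∀ x, Commute x u
  · refine ⟨{1}, Set.finite_singleton 1, fun γ hγ => ⟨1, rfl, ?_⟩⟩
    rw [eq_one_of_forall_commute hu hγ hcomm, mul_one]
    exact one_mem _
  push Not at hcomm
  obtain ⟨t, ht⟩ := hcomm
  refine ⟨{s | s ∈ fixingModZPowers u ∧ (s t = t ∨ s t = t * u)}, ?_, fun γ hγ => ?_⟩
  · refine Set.Finite.of_finite_image (f := fun s => s t) ?_ ?_
    · refine ((Set.finite_singleton (t * u)).insert t).subset ?_
      rintro _ ⟨s, ⟨-, hs⟩, rfl⟩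
      exact hs
    · rintro s ⟨hs, -⟩ s' ⟨hs', -⟩ h
      exact eq_of_apply_eq_of_not_commute hu hs hs' ht h
  · obtain ⟨j, hj⟩ := exists_mul_conj_zpow_apply hu hγ ht
    refine ⟨γ * conj (u ^ j), ⟨mul_mem hγ (conj_zpow_mem_fixingModZPowers j), hj⟩, ?_⟩
    rw [mul_inv_rev, inv_mul_cancel_right]
    exact inv_mem ⟨u ^ j, rfl⟩

theorem finiteIndex_range_conj_of_zpowers (hu : ¬IsOfFinOrder u) [(zpowers u).Characteristic]
    [(zpowers u).FiniteIndex] : (conj : A →* MulAut A).range.FiniteIndex := by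
  obtain ⟨S, hS, hcover⟩ := exists_finite_forall_exists_inv_mul_mem_range_conj hu
  have := finiteIndex_fixingModZPowers hu
  exact Subgroup.finiteIndex_of_finiteIndex_of_forall_exists_inv_mul_mem _ hS hcover

end MulAut

end

namespace IsVirtuallyCyclic

variable {A : Type*} [Group A]

theorem fg (hA : IsVirtuallyCyclic A) : Group.FG A := by
  obtain ⟨H, hcyc, hfi⟩ := hA
  obtain ⟨g, rfl⟩ := H.isCyclic_iff_exists_zpowers_eq_top.mp hcyc
  exact Group.fg_of_finiteIndex (H := zpowers g) ⟨{g}, by simp [zpowers_eq_closure]⟩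

theorem exists_zpowers_characteristic [Infinite A] (hA : IsVirtuallyCyclic A) :
    ∃ u : A, ¬IsOfFinOrder u ∧ (zpowers u).Characteristic ∧ (zpowers u).FiniteIndex := by
  have := hA.fg
  obtain ⟨H, hcyc, hfi⟩ := hA
  obtain ⟨C, hCH, hchar, hfiC⟩ := H.exists_characteristic_finiteIndex_le
  have := isCyclic_of_le hCH
  obtain ⟨u, rfl⟩ := C.isCyclic_iff_exists_zpowers_eq_top.mp this
  refine ⟨u, fun hu => ?_, hchar, hfiC⟩
  have : Finite (zpowers u) := (finite_zpowers.mpr hu).to_subtype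
  have := (finite_iff_finite_and_finiteIndex (H := zpowers u)).mpr ⟨this, hfiC⟩
  exact not_finite A

theorem finiteIndex_range_conj (hA : IsVirtuallyCyclic A) :
    (MulAut.conj : A →* MulAut A).range.FiniteIndex := by
  cases finite_or_infinite A
  · infer_instance
  · obtain ⟨u, hu, _, _⟩ := hA.exists_zpowers_characteristic
    exact MulAut.finiteIndex_range_conj_of_zpowers hu

end IsVirtuallyCyclic

theorem MonoidHom.exists_mulAut_eq_comp_of_range_eq {A B : Type*} [Group A] [Group B]
    {i j : A →* B} (hi : Function.Injective i) (hj : Function.Injective j) (h : i.range = j.range) :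
    ∃ α : MulAut A, i = j.comp α.toMonoidHom := by
  refine ⟨(ofInjective hi).trans ((MulEquiv.subgroupCongr h).trans (ofInjective hj).symm), ?_⟩
  ext x
  simp [MonoidHom.ofInjective_apply]

/-- Given virtually cyclic groups `A` and `B` and `n : ℕ`, there are only finitely
many monomorphisms `i : A → B` whose image has index at most `n` in `B`, up to
precomposition by inner automorphisms of `A`. -/
theorem finitely_many_monos_up_to_inner
    (A B : Type*) [Group A] [Group B]
    (hA : IsVirtuallyCyclic A) (hB : IsVirtuallyCyclic B) (n : ℕ) :
    ∃ (k : ℕ) (f : Fin k → (A →* B)),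
      ∀ i : A →* B, Function.Injective i →
        i.range.FiniteIndex → i.range.index ≤ n →
        ∃ (j : Fin k) (a : A), i.comp (MulAut.conj a).toMonoidHom = f j := by
  have := hB.fg
  have := hA.finiteIndex_range_conj
  let pick : Subgroup B → A →* B := Function.invFunOn MonoidHom.range {i | Function.Injective i}
  obtain ⟨k, f, -, hf⟩ := ((finite_setOf_finiteIndex_index_le n).image2
    (fun K (q : MulAut A ⧸ (MulAut.conj : A →* MulAut A).range) =>
      (pick K).comp q.out.toMonoidHom) Set.finite_univ).fin_param
  refine ⟨k, f, fun i hi hfi hn => ?_⟩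
  have hpick : ∃ i' ∈ {i : A →* B | Function.Injective i}, i'.range = i.range := ⟨i, hi, rfl⟩
  obtain ⟨α, hα⟩ := MonoidHom.exists_mulAut_eq_comp_of_range_eq hi
    (Function.invFunOn_mem hpick) (Function.invFunOn_eq hpick).symm
  obtain ⟨⟨_, a, rfl⟩, ha⟩ := QuotientGroup.mk_out_eq_mul (MulAut.conj : A →* MulAut A).range α
  obtain ⟨j, hj⟩ : i.comp (MulAut.conj a).toMonoidHom ∈ Set.range f := by
    rw [hf]
    refine ⟨i.range, ⟨hfi, hn⟩, α, trivial, ?_⟩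
    dsimp only
    rw [ha]
    conv_rhs => rw [hα]
    rfl
  exact ⟨j, a, hj.symm⟩
end

section
/- Every infinite virtually cyclic group has finite outer automorphism group. -/
/-!
An infinite virtually cyclic group `A` has an infinite cyclic characteristic subgroup `⟨w⟩` of
finite index: the subgroup generated by all `m`-th powers, where `m` is the index of a cyclic
normal subgroup. Every automorphism sends `w` to `w` or `w⁻¹`, so `F = ⟨w ^ 4⟩` is characteristic
as well, and `Aut A` acts on the finite group `A ⧸ F` with a kernel of finite index. An
automorphism `φ` in that kernel is inner: it fixes `w`, hence fixes every `x` commuting with `w`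
(because `x ^ m ∈ ⟨w⟩` and `⟨w⟩` is torsion free); such `x` form a subgroup of index at most two,
and on an element inverting `w` the map `φ` is conjugation by a power of `w`.
-/

open Subgroup

section

variable {G : Type*} [Group G]

theorem Subgroup.relIndex_zpowers_pow_ne_zero (g : G) {n : ℕ} (hn : n ≠ 0) :
    (zpowers (g ^ n)).relIndex (zpowers g) ≠ 0 := by
  rw [← range_zpowersHom g, ← index_comap]
  have hle : (AddSubgroup.zmultiples (n : ℤ)).toSubgroup ≤
      (zpowers (g ^ n)).comap (zpowersHom G g) := by
    rintro _ ⟨k, rfl⟩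
    exact ⟨k, by change (g ^ n) ^ k = g ^ (k * (n : ℤ)); rw [zpow_mul', zpow_natCast]⟩
  refine ne_zero_of_dvd_ne_zero ?_ (index_dvd_of_le hle)
  simpa [Int.index_zmultiples] using hn

theorem Subgroup.finiteIndex_zpowers_pow (g : G) [(zpowers g).FiniteIndex] {n : ℕ} (hn : n ≠ 0) :
    (zpowers (g ^ n)).FiniteIndex :=
  ⟨by
    rw [← relIndex_mul_index (zpowers_le.mpr (pow_mem (mem_zpowers g) n))]
    exact mul_ne_zero (relIndex_zpowers_pow_ne_zero g hn) FiniteIndex.index_ne_zero⟩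

theorem not_isOfFinOrder_of_finiteIndex_zpowers [Infinite G] (g : G) [(zpowers g).FiniteIndex] :
    ¬IsOfFinOrder g := by
  have h := (zpowers g).card_mul_index
  rw [Nat.card_zpowers, Nat.card_eq_zero_of_infinite] at h
  exact orderOf_eq_zero_iff.mp
    ((mul_eq_zero.mp h).resolve_right FiniteIndex.index_ne_zero)

theorem Subgroup.characteristic_closure_range_pow (n : ℕ) :
    (closure (Set.range fun g : G => g ^ n)).Characteristic := by
  refine characteristic_iff_map_le.mpr fun φ => ?_
  rw [map_le_iff_le_comap, closure_le]
  rintro _ ⟨g, rfl⟩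
  exact subset_closure ⟨φ g, (map_pow φ g n).symm⟩

theorem commute_mul_inv_of_conj_eq_inv {w x a : G} (hx : x * w * x⁻¹ = w⁻¹)
    (ha : a * w * a⁻¹ = w⁻¹) : Commute (x * a⁻¹) w := by
  have flip : ∀ y : G, y * w * y⁻¹ = w⁻¹ → y * w⁻¹ * y⁻¹ = w := fun y h => by
    simpa [mul_assoc] using congrArg (·⁻¹) h
  calc x * a⁻¹ * w = x * a⁻¹ * (a * w⁻¹ * a⁻¹) := by rw [flip a ha]
    _ = (x * w⁻¹ * x⁻¹) * (x * a⁻¹) := by group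
    _ = w * (x * a⁻¹) := by rw [flip x hx]

end

namespace MulAut

variable {A : Type*} [Group A]

def quotientHom (F : Subgroup A) [F.Characteristic] : MulAut A →* MulAut (A ⧸ F) where
  toFun φ := QuotientGroup.congr F F φ (characteristic_iff_map_eq.mp ‹_› φ)
  map_one' := by ext ⟨x⟩; rfl
  map_mul' _ _ := by ext ⟨x⟩; rfl

theorem quotientHom_apply_mk (F : Subgroup A) [F.Characteristic] (φ : MulAut A) (x : A) :
    quotientHom F φ x = φ x := rfl

theorem mem_ker_quotientHom {F : Subgroup A} [F.Characteristic] {φ : MulAut A} :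
    φ ∈ (quotientHom F).ker ↔ ∀ x, x⁻¹ * φ x ∈ F := by
  rw [MonoidHom.mem_ker, MulEquiv.ext_iff, QuotientGroup.forall_mk]
  refine forall_congr' fun x => ?_
  rw [quotientHom_apply_mk, one_apply, eq_comm, QuotientGroup.eq]

theorem finite_quotient_of_ker_quotientHom_le (F : Subgroup A) [F.Characteristic] [F.FiniteIndex]
    {H : Subgroup (MulAut A)} (hH : (quotientHom F).ker ≤ H) : Finite (MulAut A ⧸ H) :=
  have : Finite (MulAut (A ⧸ F)) := Finite.of_injective _ DFunLike.coe_injective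
  have := finiteIndex_of_le hH
  inferInstance

end MulAut

theorem IsVirtuallyCyclic.exists_characteristic_zpowers {A : Type*} [Group A] [Infinite A]
    (hA : IsVirtuallyCyclic A) :
    ∃ w : A, ¬IsOfFinOrder w ∧ (zpowers w).Characteristic ∧ (zpowers w).FiniteIndex := by
  obtain ⟨C, hC, hCfin⟩ := hA
  set N := C.normalCore
  have : IsCyclic N := isCyclic_of_le C.normalCore_le
  obtain ⟨z, hzN⟩ := (Subgroup.isCyclic_iff_exists_zpowers_eq_top N).mp this
  set M := closure (Set.range fun a : A => a ^ N.index)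
  have hMN : M ≤ N := (closure_le N).mpr (Set.range_subset_iff.mpr N.pow_index_mem)
  have : (zpowers z).FiniteIndex := hzN ▸ C.finiteIndex_normalCore
  have : (zpowers (z ^ N.index)).FiniteIndex := finiteIndex_zpowers_pow z FiniteIndex.index_ne_zero
  have hM : M.FiniteIndex := finiteIndex_of_le (zpowers_le.mpr (subset_closure ⟨z, rfl⟩))
  obtain ⟨w, hwM⟩ := (Subgroup.isCyclic_iff_exists_zpowers_eq_top M).mp (isCyclic_of_le hMN)
  have hw : (zpowers w).FiniteIndex := hwM ▸ hM
  exact ⟨w, not_isOfFinOrder_of_finiteIndex_zpowers w, hwM ▸ characteristic_closure_range_pow _, hw⟩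

namespace MulAut

variable {A : Type*} [Group A] {w : A}

theorem apply_eq_or_eq_inv_s6 (hw : ¬IsOfFinOrder w) [(zpowers w).Characteristic] (φ : MulAut A) :
    φ w = w ∨ φ w = w⁻¹ := by
  have h := characteristic_iff_map_eq.mp ‹_› φ
  rw [MonoidHom.map_zpowers] at h
  rcases (zpowers_eq_zpowers_iff hw).mp h.symm with h | h
  exacts [Or.inl h.symm, Or.inr h.symm]

theorem conj_apply_eq_or_eq_inv (hw : ¬IsOfFinOrder w) [(zpowers w).Characteristic] (x : A) :
    x * w * x⁻¹ = w ∨ x * w * x⁻¹ = w⁻¹ :=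
  apply_eq_or_eq_inv_s6 hw (conj x)

end MulAut

theorem Subgroup.characteristic_zpowers_pow {A : Type*} [Group A] {w : A} (hw : ¬IsOfFinOrder w)
    [(zpowers w).Characteristic] (n : ℕ) : (zpowers (w ^ n)).Characteristic :=
  characteristic_iff_map_eq.mpr fun φ => by
    rw [MonoidHom.map_zpowers, map_pow]
    rcases MulAut.apply_eq_or_eq_inv_s6 hw φ with h | h
    · rw [MulEquiv.coe_toMonoidHom, h]
    · rw [MulEquiv.coe_toMonoidHom, h, inv_pow, zpowers_inv]

namespace MulAut

variable {A : Type*} [Group A] {w : A}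

theorem ext_of_commute (hw : ¬IsOfFinOrder w) [(zpowers w).Characteristic] {a : A}
    (ha : a * w * a⁻¹ = w⁻¹) {φ ψ : MulAut A} (h : ∀ x, Commute x w → φ x = ψ x)
    (ha' : φ a = ψ a) : φ = ψ := by
  ext x
  rcases conj_apply_eq_or_eq_inv hw x with hx | hx
  · exact h x (mul_inv_eq_iff_eq_mul.mp hx)
  · calc φ x = φ (x * a⁻¹) * φ a := by rw [← map_mul, inv_mul_cancel_right]
      _ = ψ (x * a⁻¹) * ψ a := by rw [h _ (commute_mul_inv_of_conj_eq_inv hx ha), ha']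
      _ = ψ x := by rw [← map_mul, inv_mul_cancel_right]

theorem apply_eq_self_of_commute_s6 (hw : ¬IsOfFinOrder w) [(zpowers w).Normal]
    [(zpowers w).FiniteIndex] {φ : MulAut A} (hφw : φ w = w) (hφ : ∀ x, x⁻¹ * φ x ∈ zpowers w)
    {x : A} (hx : Commute x w) : φ x = x := by
  obtain ⟨k, hk⟩ := mem_zpowers_iff.mp (hφ x)
  obtain ⟨j, hj⟩ := mem_zpowers_iff.mp ((zpowers w).pow_index_mem x)
  have hφx : φ x = x * w ^ k := by rw [hk, mul_inv_cancel_left]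
  have hfix : φ (x ^ (zpowers w).index) = x ^ (zpowers w).index := by
    rw [← hj, map_zpow, hφw]
  rw [map_pow, hφx, (hx.zpow_right k).mul_pow, mul_eq_left, ← zpow_natCast, ← zpow_mul,
    ← zpow_zero w] at hfix
  have hkm := injective_zpow_iff_not_isOfFinOrder.mpr hw hfix
  have hk0 : k = 0 :=
    (mul_eq_zero.mp hkm).resolve_right (by exact_mod_cast FiniteIndex.index_ne_zero)
  rw [hφx, hk0, zpow_zero, mul_one]

/- The exponent `4` is even, so that `φ a = a * w ^ (4 * k)` is conjugation by `w ^ (-2 * k)` when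
`a` inverts `w`, and does not divide `2`, which excludes `φ w = w⁻¹`. -/
theorem mem_range_conj_of_forall_inv_mul_mem (hw : ¬IsOfFinOrder w) [(zpowers w).Characteristic]
    [(zpowers w).FiniteIndex] {φ : MulAut A} (hφ : ∀ x, x⁻¹ * φ x ∈ zpowers (w ^ 4)) :
    φ ∈ (conj : A →* MulAut A).range := by
  have hφ' : ∀ x, x⁻¹ * φ x ∈ zpowers w :=
    fun x => zpowers_le.mpr (pow_mem (mem_zpowers w) 4) (hφ x)
  have hφw : φ w = w := by
    refine (apply_eq_or_eq_inv_s6 hw φ).resolve_right fun h => ?_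
    obtain ⟨k, hk⟩ := mem_zpowers_iff.mp (hφ w)
    rw [h, ← zpow_natCast, ← zpow_mul, show w⁻¹ * w⁻¹ = w ^ (-2 : ℤ) by group] at hk
    have := injective_zpow_iff_not_isOfFinOrder.mpr hw hk
    omega
  have hfix : ∀ x, Commute x w → φ x = x := fun x => apply_eq_self_of_commute_s6 hw hφw hφ'
  by_cases hinv : ∃ a, a * w * a⁻¹ = w⁻¹
  · obtain ⟨a, ha⟩ := hinv
    obtain ⟨k, hk⟩ := mem_zpowers_iff.mp (hφ a)
    set v := w ^ (2 * k)
    have hav : a * v * a⁻¹ = v⁻¹ := by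
      have h := map_zpow (conj a) w (2 * k)
      rwa [conj_apply, conj_apply, ha, inv_zpow] at h
    refine ⟨v⁻¹, ext_of_commute hw ha (fun x hx => ?_) ?_⟩
    · rw [conj_apply, hfix x hx, ← ((hx.zpow_right (2 * k)).inv_right).eq, mul_inv_cancel_right]
    · calc conj v⁻¹ a = a * v * a⁻¹ * a * v := by rw [conj_apply, inv_inv, hav]
        _ = a * (w ^ 4) ^ k := by simp only [v]; group
        _ = φ a := by rw [hk, mul_inv_cancel_left]
  · refine ⟨1, MulEquiv.ext fun x => ?_⟩
    have hx : Commute x w := mul_inv_eq_iff_eq_mul.mp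
      ((conj_apply_eq_or_eq_inv hw x).resolve_right (not_exists.mp hinv x))
    rw [map_one, one_apply, hfix x hx]

end MulAut

/-- Every infinite virtually cyclic group has finite outer automorphism group,
i.e. the quotient of `Aut A` by the inner automorphisms is finite. -/
theorem out_of_virtually_cyclic_finite
    (A : Type*) [Group A] [Infinite A] (hA : IsVirtuallyCyclic A) :
    Finite (MulAut A ⧸ (MulAut.conj : A →* MulAut A).range) := by
  obtain ⟨w, hw, hchar, hfin⟩ := hA.exists_characteristic_zpowers
  have : (zpowers (w ^ 4)).Characteristic := characteristic_zpowers_pow hw 4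
  have : (zpowers (w ^ 4)).FiniteIndex := finiteIndex_zpowers_pow w (by norm_num)
  exact MulAut.finite_quotient_of_ker_quotientHom_le _ fun φ hφ =>
    MulAut.mem_range_conj_of_forall_inv_mul_mem hw (MulAut.mem_ker_quotientHom.mp hφ)
end

section
/- Let P be a finitely generated abelian group and A ⊆ P a subgroup. Declare two intermediate subgroups B, B' (with A ⊆ B ⊆ P and A ⊆ B' ⊆ P) equivalent if there exists a group isomorphism B → B' restricting to the identity on A. Then the number of equivalence classes of intermediate subgroups is finite. -/
/-!
Let `K ⊇ A` be the preimage of the torsion subgroup of `P ⧸ A`, so that `K ⧸ A` is finite and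
`P ⧸ K` is free of finite rank. For `A ≤ B` the image of `B` in `P ⧸ K` is free, hence
`B ≅ (B ⊓ K) × B ⧸ (B ⊓ K)` by an isomorphism fixing `B ⊓ K ⊇ A`. So the class of `B` is
determined by the pair `(B ⊓ K, rank (B ⧸ (B ⊓ K)))`, which takes finitely many values:
`A ≤ B ⊓ K ≤ K` and the rank is bounded by that of `P ⧸ K`.
-/

open Submodule Module

theorem exists_fin_representatives_of_finite_image {α ι : Type*} {s : Set α} (f : α → ι)
    (hf : (f '' s).Finite) (r : α → α → Prop) (hr : ∀ a ∈ s, ∀ b ∈ s, f a = f b → r a b) :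
    ∃ (k : ℕ) (reps : Fin k → α), (∀ i, reps i ∈ s) ∧ ∀ a ∈ s, ∃ i, r a (reps i) := by
  have := hf.to_subtype
  obtain ⟨k, ⟨e⟩⟩ := Finite.exists_equiv_fin (f '' s)
  choose g hgs hgf using fun y : f '' s => y.2
  refine ⟨k, fun i => g (e.symm i), fun i => hgs _, fun a ha => ⟨e ⟨f a, a, ha, rfl⟩, ?_⟩⟩
  exact hr a ha _ (hgs _) (by rw [hgf, e.symm_apply_apply])

namespace Submodule

section Ring

variable {R M Q : Type*} [Ring R] [AddCommGroup M] [Module R M] [AddCommGroup Q] [Module R Q]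

theorem exists_linearEquiv_inf_ker_prod_map (ψ : M →ₗ[R] Q) (B : Submodule R M)
    [Projective R (B.map ψ)] :
    ∃ e : B ≃ₗ[R] ↥(B ⊓ LinearMap.ker ψ) × B.map ψ,
      ∀ c, e (inclusion inf_le_left c) = (c, 0) := by
  have hexact : Function.Exact (inclusion (inf_le_left : B ⊓ LinearMap.ker ψ ≤ B))
      (ψ.submoduleMap B) := by
    rintro ⟨x, hx⟩
    simp [Subtype.ext_iff, hx]
  obtain ⟨l, hl⟩ := (ψ.submoduleMap B).exists_rightInverse_of_surjective
    (LinearMap.range_eq_top.2 (ψ.submoduleMap_surjective B))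
  let e := hexact.splitSurjectiveEquiv (inclusion_injective _) ⟨l, hl⟩
  exact ⟨e.1, fun c => e.1.eq_symm_apply.1 (LinearMap.congr_fun e.2.1 c)⟩

theorem exists_linearEquiv_of_inf_ker_eq (ψ : M →ₗ[R] Q) {B B' : Submodule R M}
    [Projective R (B.map ψ)] [Projective R (B'.map ψ)]
    (hker : B ⊓ LinearMap.ker ψ = B' ⊓ LinearMap.ker ψ) (σ : B.map ψ ≃ₗ[R] B'.map ψ) :
    ∃ e : B ≃ₗ[R] B', ∀ x (hx : x ∈ B ⊓ LinearMap.ker ψ), (e ⟨x, hx.1⟩ : M) = x := by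
  obtain ⟨e₁, he₁⟩ := exists_linearEquiv_inf_ker_prod_map ψ B
  obtain ⟨e₂, he₂⟩ := exists_linearEquiv_inf_ker_prod_map ψ B'
  refine ⟨e₁ ≪≫ₗ (LinearEquiv.ofEq _ _ hker).prodCongr σ ≪≫ₗ e₂.symm, fun x hx => ?_⟩
  have hx' : x ∈ B' ⊓ LinearMap.ker ψ := hker ▸ hx
  have h₁ : e₁ ⟨x, hx.1⟩ = (⟨x, hx⟩, 0) := he₁ ⟨x, hx⟩
  have h₂ : e₂.symm (⟨x, hx'⟩, 0) = ⟨x, hx'.1⟩ := e₂.symm_apply_eq.2 (he₂ ⟨x, hx'⟩).symm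
  simp only [LinearEquiv.trans_apply, h₁, LinearEquiv.prodCongr_apply, map_zero]
  exact congrArg Subtype.val h₂

end Ring

section PID

variable {R M Q : Type*} [CommRing R] [IsDomain R] [IsPrincipalIdealRing R]
  [AddCommGroup M] [Module R M] [AddCommGroup Q] [Module R Q] [Module.Finite R Q]
  [IsTorsionFree R Q]

theorem exists_linearEquiv_of_inf_ker_eq_of_finrank_eq (ψ : M →ₗ[R] Q) {B B' : Submodule R M}
    (hker : B ⊓ LinearMap.ker ψ = B' ⊓ LinearMap.ker ψ)
    (hrank : finrank R (B.map ψ) = finrank R (B'.map ψ)) :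
    ∃ e : B ≃ₗ[R] B', ∀ x (hx : x ∈ B ⊓ LinearMap.ker ψ), (e ⟨x, hx.1⟩ : M) = x :=
  exists_linearEquiv_of_inf_ker_eq ψ hker (LinearEquiv.ofFinrankEq _ _ hrank)

end PID

section TorsionFreeQuotient

variable {R M : Type*} [CommRing R] [AddCommGroup M] [Module R M]

def torsionFreeQuotientMap (A : Submodule R M) : M →ₗ[R] (M ⧸ A) ⧸ torsion R (M ⧸ A) :=
  (torsion R (M ⧸ A)).mkQ ∘ₗ A.mkQ

theorem ker_torsionFreeQuotientMap (A : Submodule R M) :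
    LinearMap.ker A.torsionFreeQuotientMap = (torsion R (M ⧸ A)).comap A.mkQ := by
  rw [torsionFreeQuotientMap, LinearMap.ker_comp, ker_mkQ]

theorem le_ker_torsionFreeQuotientMap (A : Submodule R M) :
    A ≤ LinearMap.ker A.torsionFreeQuotientMap := fun a ha => by
  simp [torsionFreeQuotientMap, (Quotient.mk_eq_zero A).2 ha]

theorem finite_Icc_of_finite_map_mkQ {A K : Submodule R M} [Finite (K.map A.mkQ)] :
    (Set.Icc A K).Finite := by
  refine Set.Finite.of_finite_image (f := fun C => (C.map A.mkQ : Set (M ⧸ A))) ?_ ?_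
  · refine (Set.toFinite (K.map A.mkQ : Set (M ⧸ A))).finite_subsets.subset ?_
    rintro _ ⟨C, hC, rfl⟩
    exact map_mono hC.2
  · intro C hC C' hC' h
    have := congrArg (comap A.mkQ) (SetLike.coe_injective h)
    simpa [comap_map_mkQ, sup_eq_right.2 hC.1, sup_eq_right.2 hC'.1] using this

noncomputable def relIsoInvariant (A B : Submodule R M) : Submodule R M × ℕ :=
  (B ⊓ LinearMap.ker A.torsionFreeQuotientMap, finrank R (B.map A.torsionFreeQuotientMap))

theorem exists_linearEquiv_of_relIsoInvariant_eq [IsDomain R] [IsPrincipalIdealRing R]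
    [Module.Finite R M] {A B B' : Submodule R M} (hB : A ≤ B)
    (h : A.relIsoInvariant B = A.relIsoInvariant B') :
    ∃ e : B ≃ₗ[R] B', ∀ x (hx : x ∈ A), (e ⟨x, hB hx⟩ : M) = x := by
  obtain ⟨e, he⟩ := exists_linearEquiv_of_inf_ker_eq_of_finrank_eq _ (Prod.ext_iff.1 h).1
    (Prod.ext_iff.1 h).2
  exact ⟨e, fun x hx => he x ⟨hB hx, A.le_ker_torsionFreeQuotientMap hx⟩⟩

end TorsionFreeQuotient

section Int

variable {M : Type*} [AddCommGroup M] [Module.Finite ℤ M]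

theorem finite_Icc_ker_torsionFreeQuotientMap (A : Submodule ℤ M) :
    (Set.Icc A (LinearMap.ker A.torsionFreeQuotientMap)).Finite := by
  have : Finite (torsion ℤ (M ⧸ A)) := finite_of_fg_torsion _ torsion_isTorsion
  have : Finite ((LinearMap.ker A.torsionFreeQuotientMap).map A.mkQ) := by
    rwa [ker_torsionFreeQuotientMap, map_comap_eq_of_surjective A.mkQ_surjective]
  exact finite_Icc_of_finite_map_mkQ

theorem finite_image_relIsoInvariant (A : Submodule ℤ M) :
    (A.relIsoInvariant '' Set.Ici A).Finite := by
  refine ((finite_Icc_ker_torsionFreeQuotientMap A).prod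
    (Set.finite_Iic (finrank ℤ ((M ⧸ A) ⧸ torsion ℤ (M ⧸ A))))).subset ?_
  rintro _ ⟨B, hB, rfl⟩
  exact ⟨⟨le_inf hB A.le_ker_torsionFreeQuotientMap, inf_le_right⟩, finrank_le _⟩

end Int

end Submodule

/-- Let `P` be a finitely generated abelian group and `A ⊆ P` a subgroup. Up to
isomorphisms restricting to the identity on `A`, there are only finitely many
subgroups `B` with `A ⊆ B ⊆ P`. -/
theorem finitely_many_intermediate_subgroups_up_to_iso_rel_A
    (P : Type*) [CommGroup P] [Group.FG P] (A : Subgroup P) :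
    ∃ (k : ℕ) (reps : Fin k → Subgroup P) (hreps : ∀ i, A ≤ reps i),
      ∀ B : Subgroup P, (hB : A ≤ B) →
        ∃ (i : Fin k) (φ : B ≃* reps i),
          ∀ a, (ha : a ∈ A) → (φ ⟨a, hB ha⟩ : P) = a := by
  let toSubmodule (B : Subgroup P) : Submodule ℤ (Additive P) :=
    AddSubgroup.toIntSubmodule B.toAddSubgroup
  have : Module.Finite ℤ (Additive P) := Module.Finite.iff_addGroup_fg.2 inferInstance
  obtain ⟨k, reps, hreps, hrep⟩ := exists_fin_representatives_of_finite_image (s := Set.Ici A)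
    (fun B => (toSubmodule A).relIsoInvariant (toSubmodule B))
    ((toSubmodule A).finite_image_relIsoInvariant.subset <| by
      rintro _ ⟨B, hB, rfl⟩
      exact ⟨toSubmodule B, hB, rfl⟩)
    (fun B B' => ∀ hB : A ≤ B, ∃ φ : B ≃* B', ∀ a (ha : a ∈ A), (φ ⟨a, hB ha⟩ : P) = a)
    (fun B _ B' _ h hB => by
      obtain ⟨e, he⟩ :=
        Submodule.exists_linearEquiv_of_relIsoInvariant_eq (B := toSubmodule B) hB h
      -- the submodule attached to `B` has carrier type `Additive B` up to unfolding
      exact ⟨MulEquiv.toAdditive.symm e.toAddEquiv, fun a ha => he a ha⟩)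
  exact ⟨k, reps, hreps, fun B hB => (hrep B hB).imp fun i h => h hB⟩
end

section
/- Let H be the discrete Heisenberg group with presentation ⟨a, b, c | [a,b] = c, [a,c] = [b,c] = 1⟩, and for n ≥ 1 let Hₙ be the subgroup generated by aⁿ, bⁿ, and c. Then the derived subgroup of Hₙ is generated by c^{n²}, the center of Hₙ is generated by c, and hence the index of the derived subgroup in the center of Hₙ equals n². Consequently, the groups Hₙ for distinct n are pairwise non-isomorphic. -/
/-!
In coordinates, `Hₙ` consists of the triples `(x, y, z)` with `n ∣ x` and `n ∣ y`, and the
commutator of `(x, y, z)` and `(x', y', z')` is the central element `(0, 0, x y' - x' y)`.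
Hence every commutator of `Hₙ` is a power of `c^{n²} = [aⁿ, bⁿ]`, while an element commuting
with `aⁿ` and `bⁿ` has `x = y = 0`, i.e. is a power of `c`. As `c` has infinite order,
`⟨c^{n²}⟩` has index `n²` in `⟨c⟩`. An isomorphism maps derived subgroup and center onto
derived subgroup and center, so this index distinguishes the `Hₙ`.
-/

/-- The discrete Heisenberg group, realized as triples `(x, y, z)` of integers
corresponding to the upper unitriangular matrix with entries `x = M₁₂`,
`y = M₂₃`, `z = M₁₃`. -/
@[ext]
structure Heis where
  x : ℤ
  y : ℤ
  z : ℤ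

instance : Mul Heis := ⟨fun p q => ⟨p.x + q.x, p.y + q.y, p.z + q.z + p.x * q.y⟩⟩
instance : One Heis := ⟨⟨0, 0, 0⟩⟩
instance : Inv Heis := ⟨fun p => ⟨-p.x, -p.y, -p.z + p.x * p.y⟩⟩

@[simp] lemma Heis.mul_x (p q : Heis) : (p * q).x = p.x + q.x := rfl
@[simp] lemma Heis.mul_y (p q : Heis) : (p * q).y = p.y + q.y := rfl
@[simp] lemma Heis.mul_z (p q : Heis) : (p * q).z = p.z + q.z + p.x * q.y := rfl
@[simp] lemma Heis.one_x : (1 : Heis).x = 0 := rfl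
@[simp] lemma Heis.one_y : (1 : Heis).y = 0 := rfl
@[simp] lemma Heis.one_z : (1 : Heis).z = 0 := rfl
@[simp] lemma Heis.inv_x (p : Heis) : p⁻¹.x = -p.x := rfl
@[simp] lemma Heis.inv_y (p : Heis) : p⁻¹.y = -p.y := rfl
@[simp] lemma Heis.inv_z (p : Heis) : p⁻¹.z = -p.z + p.x * p.y := rfl

instance : Group Heis where
  mul_assoc p q r := by ext <;> simp <;> ring
  one_mul p := by ext <;> simp
  mul_one p := by ext <;> simp
  inv_mul_cancel p := by ext <;> simp

/-- The generator `a` (elementary matrix `E₁₂`). -/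
def Heis.a : Heis := ⟨1, 0, 0⟩
/-- The generator `b` (elementary matrix `E₂₃`). -/
def Heis.b : Heis := ⟨0, 1, 0⟩
/-- The central generator `c = [a,b]` (elementary matrix `E₁₃`). -/
def Heis.c : Heis := ⟨0, 0, 1⟩

/-- The subgroup `Hₙ = ⟨aⁿ, bⁿ, c⟩` of the Heisenberg group. -/
def HeisSub (n : ℕ) : Subgroup Heis :=
  Subgroup.closure {Heis.a ^ n, Heis.b ^ n, Heis.c}

lemma c_mem (n : ℕ) : Heis.c ∈ HeisSub n :=
  Subgroup.subset_closure (by simp)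

/-- `c` as an element of `Hₙ`. -/
def cIn (n : ℕ) : HeisSub n := ⟨Heis.c, c_mem n⟩

open Subgroup
open scoped commutatorElement

section GroupTheory

variable {G G' : Type*} [Group G] [Group G']

theorem Subgroup.relIndex_zpowers_pow {g : G} (hg : ¬IsOfFinOrder g) (k : ℕ) :
    (zpowers (g ^ k)).relIndex (zpowers g) = k := by
  have hcomap : (zpowers (g ^ k)).comap (zpowersHom G g) =
      (AddSubgroup.zmultiples (k : ℤ)).toSubgroup := by
    ext m
    simp only [mem_comap, zpowersHom_apply, mem_zpowers_iff, ← zpow_natCast, ← zpow_mul,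
      (injective_zpow_iff_not_isOfFinOrder.mpr hg).eq_iff, Multiplicative.mem_toSubgroup,
      Int.mem_zmultiples_iff, dvd_def, eq_comm]
  rw [← range_zpowersHom g, ← index_comap, hcomap, AddSubgroup.index_toSubgroup,
    Int.index_zmultiples, Int.natAbs_natCast]

theorem MulEquiv.map_center (e : G ≃* G') : (center G).map e.toMonoidHom = center G' := by
  ext g'
  rw [mem_map_equiv, mem_center_iff, mem_center_iff]
  constructor
  · intro h h'
    apply e.symm.injective
    simp [h]
  · intro h g
    apply e.injective
    simp [h]

theorem MulEquiv.map_commutator (e : G ≃* G') :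
    (commutator G).map e.toMonoidHom = commutator G' := by
  rw [map_commutator_eq, MonoidHom.range_eq_top.mpr e.surjective, commutator_def]

theorem MulEquiv.relIndex_commutator_center (e : G ≃* G') :
    (commutator G).relIndex (center G) = (commutator G').relIndex (center G') := by
  rw [← relIndex_map_map_of_injective (f := e.toMonoidHom) _ _ e.injective, e.map_commutator,
    e.map_center]

end GroupTheory

namespace Heis

theorem zpow_of_x_mul_y_eq_zero {p : Heis} (hp : p.x * p.y = 0) (k : ℤ) :
    p ^ k = ⟨k * p.x, k * p.y, k * p.z⟩ := by
  induction k using Int.induction_on with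
  | zero => ext <;> simp
  | succ k ih =>
    rw [zpow_add_one, ih]
    ext <;> simp only [mul_x, mul_y, mul_z]
    · ring
    · ring
    · linear_combination k * hp
  | pred k ih =>
    rw [zpow_sub_one, ih]
    ext <;> simp only [mul_x, mul_y, mul_z, inv_x, inv_y, inv_z]
    · ring
    · ring
    · linear_combination (1 + k) * hp

theorem a_zpow (k : ℤ) : a ^ k = ⟨k, 0, 0⟩ := by
  rw [zpow_of_x_mul_y_eq_zero (by rfl)]
  ext <;> simp [a]

theorem b_zpow (k : ℤ) : b ^ k = ⟨0, k, 0⟩ := by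
  rw [zpow_of_x_mul_y_eq_zero (by rfl)]
  ext <;> simp [b]

theorem c_zpow (k : ℤ) : c ^ k = ⟨0, 0, k⟩ := by
  rw [zpow_of_x_mul_y_eq_zero (by rfl)]
  ext <;> simp [c]

theorem a_pow (n : ℕ) : a ^ n = ⟨n, 0, 0⟩ := by
  rw [← zpow_natCast, a_zpow]

theorem b_pow (n : ℕ) : b ^ n = ⟨0, n, 0⟩ := by
  rw [← zpow_natCast, b_zpow]

theorem c_pow (n : ℕ) : c ^ n = ⟨0, 0, n⟩ := by
  rw [← zpow_natCast, c_zpow]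

theorem not_isOfFinOrder_c : ¬IsOfFinOrder c := by
  rw [← injective_zpow_iff_not_isOfFinOrder]
  intro j k h
  simpa [c_zpow] using h

theorem commute_c (p : Heis) : Commute p c := by
  ext <;> simp [c, add_comm]

theorem commutatorElement_eq (p q : Heis) : ⁅p, q⁆ = ⟨0, 0, p.x * q.y - q.x * p.y⟩ := by
  ext <;> simp [commutatorElement_def]
  ring

theorem commutatorElement_a_pow_b_pow (n : ℕ) : ⁅a ^ n, b ^ n⁆ = c ^ (n ^ 2) := by
  rw [commutatorElement_eq, a_pow, b_pow, c_pow]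
  ext <;> simp [sq]

theorem eq_c_zpow_of_commute {n : ℕ} (hn : n ≠ 0) {p : Heis} (ha : Commute (a ^ n) p)
    (hb : Commute (b ^ n) p) : p = c ^ p.z := by
  rw [← commutatorElement_eq_one_iff_commute, commutatorElement_eq, a_pow] at ha
  rw [← commutatorElement_eq_one_iff_commute, commutatorElement_eq, b_pow] at hb
  have hy : p.y = 0 := by simpa [hn] using congrArg z ha
  have hx : p.x = 0 := by simpa [hn] using congrArg z hb
  ext <;> simp [c_zpow, hx, hy]

end Heis

open Heis

theorem a_pow_mem (n : ℕ) : a ^ n ∈ HeisSub n :=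
  subset_closure (by simp)

theorem b_pow_mem (n : ℕ) : b ^ n ∈ HeisSub n :=
  subset_closure (by simp)

theorem mem_heisSub {n : ℕ} {p : Heis} : p ∈ HeisSub n ↔ (n : ℤ) ∣ p.x ∧ (n : ℤ) ∣ p.y := by
  constructor
  · intro hp
    induction hp using closure_induction with
    | mem g hg => rcases hg with rfl | rfl | rfl <;> simp [a_pow, b_pow, c]
    | one => simp
    | mul g h _ _ hg hh => exact ⟨dvd_add hg.1 hh.1, dvd_add hg.2 hh.2⟩
    | inv g _ hg => exact ⟨dvd_neg.mpr hg.1, dvd_neg.mpr hg.2⟩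
  · rintro ⟨⟨u, hu⟩, ⟨v, hv⟩⟩
    have normal_form : p = (a ^ n) ^ u * (b ^ n) ^ v * c ^ (p.z - n * u * (n * v)) := by
      rw [← zpow_natCast a, ← zpow_natCast b, ← zpow_mul, ← zpow_mul, a_zpow, b_zpow, c_zpow]
      ext <;> simp [hu, hv]
    rw [normal_form]
    exact mul_mem (mul_mem (zpow_mem (a_pow_mem n) u) (zpow_mem (b_pow_mem n) v))
      (zpow_mem (c_mem n) _)

theorem commutator_heisSub_heisSub (n : ℕ) :
    ⁅HeisSub n, HeisSub n⁆ = zpowers (c ^ (n ^ 2)) := by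
  apply le_antisymm
  · rw [commutator_le]
    intro p hp q hq
    obtain ⟨⟨u, hu⟩, ⟨v, hv⟩⟩ := mem_heisSub.mp hp
    obtain ⟨⟨w, hw⟩, ⟨s, hs⟩⟩ := mem_heisSub.mp hq
    rw [mem_zpowers_iff]
    refine ⟨u * s - w * v, ?_⟩
    rw [commutatorElement_eq, ← zpow_natCast c, ← zpow_mul, c_zpow, hu, hv, hw, hs]
    ext
    · rfl
    · rfl
    · push_cast
      ring
  · rw [zpowers_le, ← commutatorElement_a_pow_b_pow]
    exact commutator_mem_commutator (a_pow_mem n) (b_pow_mem n)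

theorem commutator_heisSub (n : ℕ) : commutator (HeisSub n) = zpowers (cIn n ^ (n ^ 2)) := by
  apply map_injective (HeisSub n).subtype_injective
  rw [map_subtype_commutator, MonoidHom.map_zpowers, commutator_heisSub_heisSub]
  rfl

theorem center_heisSub {n : ℕ} (hn : n ≠ 0) : center (HeisSub n) = zpowers (cIn n) := by
  apply le_antisymm
  · intro g hg
    have hcomm (h : HeisSub n) : Commute (h : Heis) g :=
      congrArg Subtype.val (mem_center_iff.mp hg h)
    refine ⟨(g : Heis).z, Subtype.ext ?_⟩
    rw [SubgroupClass.coe_zpow]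
    exact (eq_c_zpow_of_commute hn (hcomm ⟨_, a_pow_mem n⟩) (hcomm ⟨_, b_pow_mem n⟩)).symm
  · rw [zpowers_le, mem_center_iff]
    exact fun g => Subtype.ext (commute_c g)

theorem relIndex_commutator_center_heisSub {n : ℕ} (hn : n ≠ 0) :
    (commutator (HeisSub n)).relIndex (center (HeisSub n)) = n ^ 2 := by
  have hc : ¬IsOfFinOrder (cIn n) := fun h =>
    not_isOfFinOrder_c ((HeisSub n).subtype.isOfFinOrder h)
  rw [commutator_heisSub, center_heisSub hn, relIndex_zpowers_pow hc]

/-- For `n ≥ 1`, the derived subgroup of `Hₙ = ⟨aⁿ, bⁿ, c⟩` is generated by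
`c^{n²}`, its center is generated by `c`, the index of the derived subgroup in
the center is `n²`, and consequently the `Hₙ` are pairwise non-isomorphic. -/
theorem heisenberg_finite_index_subgroups :
    (∀ n : ℕ, 1 ≤ n →
      commutator ↥(HeisSub n) = Subgroup.closure {cIn n ^ (n ^ 2)} ∧
      Subgroup.center ↥(HeisSub n) = Subgroup.closure {cIn n} ∧
      ((commutator ↥(HeisSub n)).subgroupOf
        (Subgroup.center ↥(HeisSub n))).index = n ^ 2) ∧
    ∀ m n : ℕ, 1 ≤ m → 1 ≤ n → m ≠ n →
      IsEmpty (↥(HeisSub m) ≃* ↥(HeisSub n)) := by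
  refine ⟨fun n hn => ?_, fun m n hm hn hmn => ⟨fun e => hmn ?_⟩⟩
  · rw [← zpowers_eq_closure, ← zpowers_eq_closure]
    exact ⟨commutator_heisSub n, center_heisSub (by omega),
      relIndex_commutator_center_heisSub (by omega)⟩
  · have h := e.relIndex_commutator_center
    rw [relIndex_commutator_center_heisSub (by omega),
      relIndex_commutator_center_heisSub (by omega)] at h
    exact Nat.pow_left_injective two_ne_zero h
end

section
/- The discrete Heisenberg group H contains infinitely many pairwise non-isomorphic subgroups of finite index. -/
/-- Auxiliary subgroup: elements with both off-corner entries divisible by `n`. -/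
def HK (n : ℕ) : Subgroup Heis where
  carrier := {p | (n : ℤ) ∣ p.x ∧ (n : ℤ) ∣ p.y}
  mul_mem' := by
    rintro p q ⟨h1, h2⟩ ⟨h3, h4⟩
    exact ⟨by simpa using dvd_add h1 h3, by simpa using dvd_add h2 h4⟩
  one_mem' := ⟨dvd_zero _, dvd_zero _⟩
  inv_mem' := by
    rintro p ⟨h1, h2⟩
    exact ⟨by simpa using h1.neg_right, by simpa using h2.neg_right⟩

lemma mem_HK {n : ℕ} {p : Heis} : p ∈ HK n ↔ (n : ℤ) ∣ p.x ∧ (n : ℤ) ∣ p.y := Iff.rfl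

/-- The reduction homomorphism whose kernel is `HK n`. -/
def heisHom (n : ℕ) : Heis →* Multiplicative (ZMod n) × Multiplicative (ZMod n) where
  toFun p := (Multiplicative.ofAdd (p.x : ZMod n), Multiplicative.ofAdd (p.y : ZMod n))
  map_one' := by simp
  map_mul' p q := by
    simp only [Heis.mul_x, Heis.mul_y, Int.cast_add, Prod.mk_mul_mk, ← ofAdd_add]

lemma HK_eq_ker (n : ℕ) [NeZero n] : HK n = (heisHom n).ker := by
  ext p
  simp [mem_HK, MonoidHom.mem_ker, heisHom, Prod.ext_iff,
    ← ZMod.intCast_zmod_eq_zero_iff_dvd, ← ofAdd_zero, Equiv.apply_eq_iff_eq]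

lemma HK_finiteIndex (n : ℕ) [NeZero n] : (HK n).FiniteIndex := by
  rw [HK_eq_ker n]
  infer_instance

lemma Heis.pow_x (p : Heis) (k : ℕ) : (p ^ k).x = k * p.x := by
  induction k with
  | zero => simp
  | succ k ih => rw [pow_succ]; simp [ih]; ring

lemma Heis.pow_y (p : Heis) (k : ℕ) : (p ^ k).y = k * p.y := by
  induction k with
  | zero => simp
  | succ k ih => rw [pow_succ]; simp [ih]; ring

lemma Heis.pow_z_central (p : Heis) (hx : p.x = 0) (k : ℕ) : (p ^ k).z = k * p.z := by
  induction k with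
  | zero => simp
  | succ k ih => rw [pow_succ]; simp [ih, Heis.pow_x, hx]; ring

lemma Heis.commutator_eq (p q : Heis) :
    p * q * p⁻¹ * q⁻¹ = ⟨0, 0, p.x * q.y - q.x * p.y⟩ := by
  ext <;> simp <;> ring

/-- Isomorphism-invariant property: every commutator is a `k`-th power. -/
def CommPow (G : Type*) [Group G] (k : ℕ) : Prop :=
  ∀ g h : G, ∃ w : G, g * h * g⁻¹ * h⁻¹ = w ^ k

lemma CommPow.transfer {G H : Type*} [Group G] [Group H] (e : G ≃* H) {k : ℕ}
    (hp : CommPow G k) : CommPow H k := by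
  intro g h
  obtain ⟨w, hw⟩ := hp (e.symm g) (e.symm h)
  refine ⟨e w, e.symm.injective ?_⟩
  simpa [map_mul, map_inv, map_pow] using hw

lemma commPow_HK (n : ℕ) : CommPow (HK n) (n ^ 2) := by
  intro g h
  obtain ⟨⟨a, ha⟩, ⟨b, hb⟩⟩ := g.2
  obtain ⟨⟨c, hc⟩, ⟨d, hd⟩⟩ := h.2
  refine ⟨⟨⟨0, 0, a * d - c * b⟩, dvd_zero _, dvd_zero _⟩, ?_⟩
  apply Subtype.ext
  push_cast
  rw [Heis.commutator_eq]
  ext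
  · simp [Heis.pow_x]
  · simp [Heis.pow_y]
  · rw [Heis.pow_z_central _ rfl]
    simp only [Heis.mul_x, Heis.mul_y, Heis.mul_z]
    rw [ha, hb, hc, hd]
    push_cast
    ring

lemma not_commPow_HK {M N : ℕ} (hM : 0 < M) (hlt : M < N) :
    ¬ CommPow (HK M) (N ^ 2) := by
  intro hp
  have hg : (⟨(M : ℤ), 0, 0⟩ : Heis) ∈ HK M := ⟨dvd_refl _, dvd_zero _⟩
  have hh : (⟨0, (M : ℤ), 0⟩ : Heis) ∈ HK M := ⟨dvd_zero _, dvd_refl _⟩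
  obtain ⟨w, hw⟩ := hp ⟨_, hg⟩ ⟨_, hh⟩
  have hw' : (⟨(M : ℤ), 0, 0⟩ : Heis) * ⟨0, (M : ℤ), 0⟩ * (⟨(M : ℤ), 0, 0⟩ : Heis)⁻¹ *
      (⟨0, (M : ℤ), 0⟩ : Heis)⁻¹ = (w : Heis) ^ (N ^ 2) := by
    have := congrArg (Subtype.val) hw
    push_cast at this
    exact this
  rw [Heis.commutator_eq] at hw'
  simp only at hw'
  have hx : ((w : Heis) ^ (N ^ 2)).x = 0 := by rw [← hw']
  have hz : ((w : Heis) ^ (N ^ 2)).z = (M : ℤ) * (M : ℤ) - 0 * 0 := by rw [← hw']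
  rw [Heis.pow_x] at hx
  have hN : 0 < N := lt_trans hM hlt
  have hwx : (w : Heis).x = 0 := by
    rcases mul_eq_zero.mp hx with h | h
    · exfalso
      have : (0 : ℤ) < ((N ^ 2 : ℕ) : ℤ) := by exact_mod_cast pow_pos hN 2
      omega
    · exact h
  rw [Heis.pow_z_central _ hwx] at hz
  have hdvd : ((N : ℤ) ^ 2) ∣ (M : ℤ) ^ 2 := ⟨(w : Heis).z, by push_cast at hz ⊢; linarith [hz]⟩
  have h1 : (M : ℤ) ^ 2 < (N : ℤ) ^ 2 := by
    have : (M : ℤ) < N := by exact_mod_cast hlt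
    have hM' : (0 : ℤ) ≤ M := by positivity
    nlinarith
  have h2 : (0 : ℤ) < (M : ℤ) ^ 2 := by positivity
  have := Int.le_of_dvd h2 hdvd
  omega

/-- The discrete Heisenberg group contains infinitely many pairwise
non-isomorphic subgroups of finite index. -/
theorem heisenberg_infinitely_many_nonisomorphic_finite_index_subgroups :
    ∃ f : ℕ → Subgroup Heis,
      (∀ n, (f n).FiniteIndex) ∧
      ∀ m n, m ≠ n → IsEmpty (↥(f m) ≃* ↥(f n)) := by
  refine ⟨fun n => HK (n + 1), fun n => HK_finiteIndex (n + 1), ?_⟩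
  have key : ∀ m n : ℕ, m < n → IsEmpty (↥(HK (m + 1)) ≃* ↥(HK (n + 1))) := by
    intro m n hmn
    constructor
    intro e
    exact not_commPow_HK (Nat.succ_pos m) (by omega)
      (CommPow.transfer e.symm (commPow_HK (n + 1)))
  intro m n hmn
  rcases lt_or_gt_of_ne hmn with h | h
  · exact key m n h
  · have := key n m h
    constructor
    intro e
    exact this.false e.symm
end

section
/- Let P be a finitely generated abelian group, A ⊆ P a subgroup, and let G₀ be any group containing A as a subgroup. As B ranges over all subgroups with A ⊆ B ⊆ P, the amalgamated free products G₀ *_A B fall into only finitely many isomorphism classes. -/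
/-!
Let `P₀` be the saturation of `A` in `P`, the elements having a nonzero power in `A`.
For `A ≤ B ≤ P` the subgroup `C = B ⊓ P₀` lies between `A` and `P₀`; since `P₀ / A` is a
finitely generated torsion group, hence finite, `C` takes only finitely many values. The
quotient `B / C` is torsion-free and finitely generated, hence free, so `B ≅ C × B / C` by an
isomorphism that is the identity on `C`; and `B / C` embeds in `P / P₀`, so its rank is at most
that of `P / P₀`. Hence `B` is determined up to isomorphism over `A` by the pair
`(C, rank (B / C))`, which takes finitely many values, and subgroups isomorphic over `A` give
isomorphic amalgams.
-/

universe u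

/-- The two-element family of groups `{G₀, B}` used to form the amalgam `G₀ *_A B`. -/
def AmalgFam (G₀ : Type u) (P : Type u) [CommGroup P] (B : Subgroup P) :
    Bool → Type u
  | true => G₀
  | false => ↥B

instance (G₀ : Type u) [Group G₀] (P : Type u) [CommGroup P] (B : Subgroup P) :
    ∀ i, Group (AmalgFam G₀ P B i)
  | true => inferInstanceAs (Group G₀)
  | false => inferInstanceAs (Group ↥B)

/-- The pair of inclusions `A → G₀` and `A → B` defining the amalgam. -/
def AmalgMaps (G₀ : Type u) [Group G₀] (P : Type u) [CommGroup P]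
    (A B : Subgroup P) (hAB : A ≤ B) (j : ↥A →* G₀) :
    ∀ i, ↥A →* AmalgFam G₀ P B i
  | true => j
  | false => Subgroup.inclusion hAB

/-- The amalgamated free product `G₀ *_A B`, as a pushout of groups. -/
def Amalg (G₀ : Type u) [Group G₀] (P : Type u) [CommGroup P]
    (A B : Subgroup P) (hAB : A ≤ B) (j : ↥A →* G₀) : Type u :=
  Monoid.PushoutI (AmalgMaps G₀ P A B hAB j)

noncomputable instance (G₀ : Type u) [Group G₀] (P : Type u) [CommGroup P]
    (A B : Subgroup P) (hAB : A ≤ B) (j : ↥A →* G₀) :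
    Group (Amalg G₀ P A B hAB j) :=
  inferInstanceAs (Group (Monoid.PushoutI (AmalgMaps G₀ P A B hAB j)))

open Module

namespace Monoid.PushoutI

noncomputable def congr {ι H : Type*} [Group H] {G G' : ι → Type*}
    [∀ i, Group (G i)] [∀ i, Group (G' i)] (φ : ∀ i, H →* G i) (φ' : ∀ i, H →* G' i)
    (e : ∀ i, G i ≃* G' i) (he : ∀ i a, e i (φ i a) = φ' i a) :
    PushoutI φ ≃* PushoutI φ' :=
  MonoidHom.toMulEquiv
    (lift (fun i => (of i).comp (e i).toMonoidHom) (base φ')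
      fun i => by ext a; simp [he i a, of_apply_eq_base])
    (lift (fun i => (of i).comp (e i).symm.toMonoidHom) (base φ)
      fun i => by ext a; simp [← he i a, of_apply_eq_base])
    (hom_ext (fun i => by ext; simp) (by ext; simp))
    (hom_ext (fun i => by ext; simp) (by ext; simp))

end Monoid.PushoutI

namespace QuotientGroup

variable {G : Type*} [CommGroup G]

theorem exists_section (N : Subgroup G) [Projective ℤ (Additive (G ⧸ N))] :
    ∃ σ : G ⧸ N →* G, ∀ q, (σ q : G ⧸ N) = q := by
  obtain ⟨σ, hσ⟩ := Module.projective_lifting_property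
    (MonoidHom.toAdditive (mk' N)).toIntLinearMap LinearMap.id (mk'_surjective N)
  exact ⟨MonoidHom.toAdditive.symm σ.toAddMonoidHom,
    fun q => congrArg Additive.toMul (LinearMap.congr_fun hσ q)⟩

noncomputable def prodEquivOfSection (N : Subgroup G) (σ : G ⧸ N →* G)
    (hσ : ∀ q, (σ q : G ⧸ N) = q) : G ≃* N × (G ⧸ N) :=
  MonoidHom.toMulEquiv
    (((MonoidHom.id G / σ.comp (mk' N)).codRestrict N fun g => by
      simp [← eq_one_iff, hσ]).prod (mk' N))
    (N.subtype.coprod σ)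
    (by ext g; simp)
    (by ext ⟨n, q⟩ <;> simp [hσ, (eq_one_iff _).mpr n.2])

theorem prodEquivOfSection_coe (N : Subgroup G) (σ : G ⧸ N →* G)
    (hσ : ∀ q, (σ q : G ⧸ N) = q) (n : N) : prodEquivOfSection N σ hσ n = (n, 1) := by
  ext <;> simp [prodEquivOfSection, (eq_one_iff _).mpr n.2]

end QuotientGroup

theorem exists_fin_representatives {α β : Type*} (τ : α → β) (hτ : (Set.range τ).Finite)
    (r : α → α → Prop) (hr : ∀ x y, τ x = τ y → r x y) :
    ∃ (m : ℕ) (R : Fin m → α), ∀ x, ∃ i, r x (R i) := by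
  have := hτ.to_subtype
  let e := Finite.equivFin (Set.range τ)
  refine ⟨_, fun i => (e.symm i).2.choose, fun x => ⟨e ⟨τ x, x, rfl⟩, hr _ _ ?_⟩⟩
  rw [(e.symm _).2.choose_spec, Equiv.symm_apply_apply]

namespace Subgroup

variable {G : Type*} [CommGroup G]

instance fg_of_commGroup_fg [Group.FG G] (H : Subgroup G) : Group.FG H := by
  have h := IsNoetherian.noetherian (AddSubgroup.toIntSubmodule H.toAddSubgroup)
  rw [Group.fg_iff_subgroup_fg, fg_iff_add_fg]
  rwa [Submodule.fg_iff_addSubgroup_fg, AddSubgroup.toIntSubmodule_toAddSubgroup] at h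

def EquivOver (C B B' : Subgroup G) : Prop :=
  ∃ e : B ≃* B', ∀ b : B, (b : G) ∈ C → (e b : G) = b

theorem EquivOver.mono {A C B B' : Subgroup G} (h : C.EquivOver B B') (hAC : A ≤ C) :
    A.EquivOver B B' :=
  let ⟨e, he⟩ := h
  ⟨e, fun b hb => he b (hAC hb)⟩

def subgroupOfEquivOfInfEq {S B B' : Subgroup G} (h : B ⊓ S = B' ⊓ S) :
    S.subgroupOf B ≃* S.subgroupOf B' where
  toFun x := ⟨⟨x, (h.le ⟨x.1.2, x.2⟩).1⟩, x.2⟩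
  invFun x := ⟨⟨x, (h.ge ⟨x.1.2, x.2⟩).1⟩, x.2⟩
  left_inv _ := rfl
  right_inv _ := rfl
  map_mul' _ _ := rfl

theorem equivOver_of_finrank_eq [Group.FG G] {S B B' : Subgroup G} (hS : B ⊓ S = B' ⊓ S)
    [IsMulTorsionFree (B ⧸ S.subgroupOf B)] [IsMulTorsionFree (B' ⧸ S.subgroupOf B')]
    (h : finrank ℤ (Additive (B ⧸ S.subgroupOf B)) =
      finrank ℤ (Additive (B' ⧸ S.subgroupOf B'))) :
    (B ⊓ S).EquivOver B B' := by
  obtain ⟨σ, hσ⟩ := QuotientGroup.exists_section (S.subgroupOf B)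
  obtain ⟨σ', hσ'⟩ := QuotientGroup.exists_section (S.subgroupOf B')
  let e := QuotientGroup.prodEquivOfSection _ σ hσ
  let e' := QuotientGroup.prodEquivOfSection _ σ' hσ'
  let f : B ⧸ S.subgroupOf B ≃* B' ⧸ S.subgroupOf B' :=
    MulEquiv.toAdditive.symm (LinearEquiv.ofFinrankEq _ _ h).toAddEquiv
  let g := subgroupOfEquivOfInfEq hS
  refine ⟨e.trans ((g.prodCongr f).trans e'.symm), fun b hb => ?_⟩
  have he : e b = (⟨b, hb.2⟩, 1) := QuotientGroup.prodEquivOfSection_coe _ σ hσ ⟨b, hb.2⟩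
  have hgf : g.prodCongr f (⟨b, hb.2⟩, 1) = (g ⟨b, hb.2⟩, 1) := Prod.ext rfl (map_one f)
  have he' : e'.symm (g ⟨b, hb.2⟩, 1) = g ⟨b, hb.2⟩ := by
    rw [MulEquiv.symm_apply_eq, QuotientGroup.prodEquivOfSection_coe]
  rw [MulEquiv.trans_apply, MulEquiv.trans_apply, he, hgf, he']
  rfl

theorem finrank_quotient_subgroupOf_le [Group.FG G] (B S : Subgroup G) :
    finrank ℤ (Additive (B ⧸ S.subgroupOf B)) ≤ finrank ℤ (Additive (G ⧸ S)) := by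
  let φ : B ⧸ S.subgroupOf B →* G ⧸ S := QuotientGroup.map _ S B.subtype le_rfl
  have hφ : Function.Injective φ := by
    refine (injective_iff_map_eq_one φ).mpr fun q hq => ?_
    obtain ⟨b, rfl⟩ := QuotientGroup.mk_surjective q
    rw [QuotientGroup.eq_one_iff, mem_subgroupOf]
    exact (QuotientGroup.eq_one_iff _).mp hq
  exact LinearMap.finrank_le_finrank_of_injective
    (f := (MonoidHom.toAdditive φ).toIntLinearMap) hφ

variable (A : Subgroup G)

def saturation : Subgroup G :=
  (CommGroup.torsion (G ⧸ A)).comap (QuotientGroup.mk' A)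

theorem le_saturation : A ≤ A.saturation := fun a ha => by
  simp [saturation, (QuotientGroup.eq_one_iff a).mpr ha]

theorem mem_saturation_of_pow_mem {g : G} {n : ℕ} (hn : n ≠ 0) (h : g ^ n ∈ A.saturation) :
    g ∈ A.saturation :=
  IsOfFinOrder.of_pow (by simpa [saturation, CommGroup.mem_torsion] using h) hn

instance isMulTorsionFree_quotient_saturation_subgroupOf (B : Subgroup G) :
    IsMulTorsionFree (B ⧸ A.saturation.subgroupOf B) := by
  refine IsMulTorsionFree.of_not_isOfFinOrder fun q hq hfin => hq ?_
  obtain ⟨b, rfl⟩ := QuotientGroup.mk_surjective q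
  obtain ⟨n, hn, hbn⟩ := isOfFinOrder_iff_pow_eq_one.mp hfin
  rw [← QuotientGroup.mk_pow, QuotientGroup.eq_one_iff, mem_subgroupOf] at hbn
  rw [QuotientGroup.eq_one_iff, mem_subgroupOf]
  exact A.mem_saturation_of_pow_mem hn.ne' (by simpa using hbn)

theorem finite_Icc_saturation [Group.FG G] : (Set.Icc A A.saturation).Finite := by
  let T := CommGroup.torsion (G ⧸ A)
  have : Finite T := CommGroup.finite_of_fg_isMulTorsion _ CommMonoid.torsion.isMulTorsion
  have hT : (Set.Iic T).Finite :=
    (Set.toFinite (T : Set (G ⧸ A))).finite_subsets.preimage SetLike.coe_injective.injOn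
  refine (hT.image (comap (QuotientGroup.mk' A))).subset fun C ⟨hAC, hCA⟩ =>
    ⟨C.map (QuotientGroup.mk' A), (map_mono hCA).trans (map_comap_le _ _), ?_⟩
  exact comap_map_eq_self (by rwa [QuotientGroup.ker_mk'])

theorem exists_fin_representatives_equivOver [Group.FG G] :
    ∃ (m : ℕ) (R : Fin m → {B : Subgroup G // A ≤ B}),
      ∀ B, A ≤ B → ∃ i, A.EquivOver B (R i) := by
  let τ (B : {B : Subgroup G // A ≤ B}) : Subgroup G × ℕ :=
    (B ⊓ A.saturation, finrank ℤ (Additive (B ⧸ A.saturation.subgroupOf B)))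
  have hτ : (Set.range τ).Finite := by
    refine (A.finite_Icc_saturation.prod
      (Set.finite_Iic (finrank ℤ (Additive (G ⧸ A.saturation))))).subset ?_
    rintro _ ⟨B, rfl⟩
    exact ⟨⟨le_inf B.2 A.le_saturation, inf_le_right⟩, finrank_quotient_subgroupOf_le _ _⟩
  have hτ_eq (B B' : {B : Subgroup G // A ≤ B}) (h : τ B = τ B') : A.EquivOver B B' :=
    (equivOver_of_finrank_eq (Prod.ext_iff.mp h).1 (Prod.ext_iff.mp h).2).mono
      (le_inf B.2 A.le_saturation)
  obtain ⟨m, R, hR⟩ := exists_fin_representatives τ hτ _ hτ_eq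
  exact ⟨m, R, fun B hAB => hR ⟨B, hAB⟩⟩

theorem EquivOver.nonempty_amalg_mulEquiv {G₀ P : Type u} [Group G₀] [CommGroup P]
    {A B B' : Subgroup P} (h : A.EquivOver B B') (hAB : A ≤ B) (hAB' : A ≤ B')
    (j : A →* G₀) :
    Nonempty (Amalg G₀ P A B hAB j ≃* Amalg G₀ P A B' hAB' j) :=
  let ⟨e, he⟩ := h
  ⟨Monoid.PushoutI.congr _ _ (fun | true => MulEquiv.refl G₀ | false => e)
    fun | true, _ => rfl | false, a => Subtype.ext (he _ a.2)⟩

end Subgroup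

theorem finitely_many_amalgams_general
    (P : Type u) [CommGroup P] [Group.FG P] (A : Subgroup P)
    (G₀ : Type u) [Group G₀] (j : ↥A →* G₀) :
    ∃ (k : ℕ) (T : Fin k → Type u) (_ : ∀ i, Group (T i)),
      ∀ (B : Subgroup P) (hAB : A ≤ B),
        ∃ i, Nonempty (Amalg G₀ P A B hAB j ≃* T i) := by
  obtain ⟨m, R, hR⟩ := A.exists_fin_representatives_equivOver
  refine ⟨m, fun i => Amalg G₀ P A (R i) (R i).2 j, fun i => inferInstance, fun B hAB => ?_⟩
  obtain ⟨i, hi⟩ := hR B hAB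
  exact ⟨i, hi.nonempty_amalg_mulEquiv hAB (R i).2 j⟩

/-- Let `P` be a finitely generated abelian group, `A ⊆ P` a subgroup, and `G₀` a
group containing (a copy of) `A`. As `B` ranges over the subgroups with
`A ⊆ B ⊆ P`, the amalgams `G₀ *_A B` fall into finitely many isomorphism
classes. -/
theorem finitely_many_amalgams
    (P : Type u) [CommGroup P] [Group.FG P] (A : Subgroup P)
    (G₀ : Type u) [Group G₀] (j : ↥A →* G₀) (hj : Function.Injective j) :
    ∃ (k : ℕ) (T : Fin k → Type u) (_ : ∀ i, Group (T i)),
      ∀ (B : Subgroup P) (hAB : A ≤ B),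
        ∃ i, Nonempty (Amalg G₀ P A B hAB j ≃* T i) :=
  finitely_many_amalgams_general P A G₀ j
end
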